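/- arXiv:1703.05101 — 5 statements merged into one kernel-verified Lean document; each statement's English description precedes it below -/
import Mathlib

section
/- Let U : 𝒳 × 𝒴 → [-1,1] be a measurable q₁×q₂-step kernel on bounded measurable sets 𝒳, 𝒴 ⊆ ℝ. Then its cut norm satisfies ‖U‖_□ ≥ (1/(4√(2 q₂)))·‖U‖₁. -/
open MeasureTheory

/-- Cut norm of a kernel over the domain `𝒳 × 𝒴`: supremum over measurable subsets
`X ⊆ 𝒳`, `Y ⊆ 𝒴` of `|∫_{X×Y} U|`. -/
noncomputable def cutNormOn (𝒳 𝒴 : Set ℝ) (U : ℝ → ℝ → ℝ) : ℝ :=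
  sSup {r : ℝ | ∃ X Y : Set ℝ, MeasurableSet X ∧ MeasurableSet Y ∧
    X ⊆ 𝒳 ∧ Y ⊆ 𝒴 ∧ r = |∫ x in X, ∫ y in Y, U x y|}

/-- `L¹` norm of a kernel over the domain `𝒳 × 𝒴`. -/
noncomputable def l1NormOn (𝒳 𝒴 : Set ℝ) (U : ℝ → ℝ → ℝ) : ℝ :=
  ∫ x in 𝒳, ∫ y in 𝒴, |U x y|

/-!
With `M a b = Q a b · |𝒳 ∩ φ₁⁻¹ a| · |𝒴 ∩ φ₂⁻¹ b|`, the `L¹` norm of `U` is `∑ |M a b|` and the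
integral of `U` over the step rectangle `(𝒳 ∩ φ₁⁻¹ S) × (𝒴 ∩ φ₂⁻¹ T)` is `∑_{S × T} M`, so it
suffices to find a rectangle `S × T` with `∑ |M| ≤ 4 √(2n) |∑_{S × T} M|`, where `n = q₂`.

For a row `m`, average `|∑ m_b ε_b|` over all sign vectors `ε ∈ {±1}ⁿ`. After flipping signs we may
assume `m ≥ 0`; testing against `sign (∑ ε_b)`, whose correlation with `ε_b` does not depend on `b`,
gives `E |∑ m_b ε_b| ≥ (‖m‖₁ / n) · E |∑ ε_b|`. The mean absolute deviation `E |∑ ε_b|` of a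
binomial is `⌈n/2⌉ C(n, ⌈n/2⌉) / 2ⁿ⁻¹ ≥ √(n/2)`, by `4ᵐ ≤ 2 √m C(2m, m)`. Hence some `ε` has
`∑_a |∑_b M a b ε_b| ≥ ‖M‖₁ / √(2n)`, and splitting first the rows and then the columns by
sign loses a factor `2` each time.
-/

open Finset

namespace Nat

theorem four_pow_sq_le_four_mul_centralBinom_sq {m : ℕ} (hm : 0 < m) :
    (4 ^ m) ^ 2 ≤ 4 * m * centralBinom m ^ 2 := by
  induction m with
  | zero => omega
  | succ k ih =>
    rcases eq_zero_or_pos k with rfl | hk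
    · simp [centralBinom, choose]
    have hsq : (k + 1) ^ 2 * centralBinom (k + 1) ^ 2 =
        4 * (2 * k + 1) ^ 2 * centralBinom k ^ 2 := by
      rw [← mul_pow, succ_mul_centralBinom_succ]; ring
    have hk' : 4 * k * (k + 1) ≤ (2 * k + 1) ^ 2 := by nlinarith
    refine le_of_mul_le_mul_left ?_ (by positivity : 0 < (k + 1) ^ 2)
    calc (k + 1) ^ 2 * (4 ^ (k + 1)) ^ 2 = 16 * (k + 1) ^ 2 * (4 ^ k) ^ 2 := by ring
      _ ≤ 16 * (k + 1) ^ 2 * (4 * k * centralBinom k ^ 2) := by gcongr; exact ih hk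
      _ = 16 * (k + 1) * (4 * k * (k + 1)) * centralBinom k ^ 2 := by ring
      _ ≤ 16 * (k + 1) * (2 * k + 1) ^ 2 * centralBinom k ^ 2 := by gcongr
      _ = 4 * (k + 1) * ((k + 1) ^ 2 * centralBinom (k + 1) ^ 2) := by rw [hsq]; ring
      _ = (k + 1) ^ 2 * (4 * (k + 1) * centralBinom (k + 1) ^ 2) := by ring

theorem sub_two_mul_mul_choose (n k : ℕ) :
    ((n : ℝ) - 2 * k) * n.choose k = (k + 1) * n.choose (k + 1) - k * n.choose k := by
  rcases le_or_gt k n with h | h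
  · have := congrArg (Nat.cast : ℕ → ℝ) (choose_succ_right_eq n k)
    push_cast [h] at this
    linarith
  · rw [choose_eq_zero_of_lt h, choose_eq_zero_of_lt (by omega)]
    simp

theorem sum_choose_mul_abs_sub_two_mul (n : ℕ) :
    ∑ k ∈ range (n + 1), (n.choose k : ℝ) * |(n : ℝ) - 2 * k| =
      2 * ((n + 1) / 2 : ℕ) * n.choose ((n + 1) / 2) := by
  set h := (n + 1) / 2
  set f : ℕ → ℝ := fun k => k * n.choose k
  have hf : ∀ k, ((n : ℝ) - 2 * k) * n.choose k = f (k + 1) - f k := fun k => by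
    simp only [f]; push_cast; exact sub_two_mul_mul_choose n k
  have hhn : h ≤ n + 1 := by omega
  rw [← sum_range_add_sum_Ico _ hhn]
  have hlow : ∑ k ∈ range h, (n.choose k : ℝ) * |(n : ℝ) - 2 * k| = f h := by
    have : f h = ∑ k ∈ range h, (f (k + 1) - f k) := by rw [sum_range_sub]; simp [f]
    rw [this]
    refine sum_congr rfl fun k hk => ?_
    have : (2 * k : ℝ) ≤ n := by exact_mod_cast (by simp at hk; omega : 2 * k ≤ n)
    rw [abs_of_nonneg (by linarith), mul_comm, hf]
  have hhigh : ∑ k ∈ Ico h (n + 1), (n.choose k : ℝ) * |(n : ℝ) - 2 * k| = f h := by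
    have : f h = ∑ k ∈ Ico h (n + 1), -(f (k + 1) - f k) := by
      rw [sum_neg_distrib, sum_Ico_eq_sub _ hhn, sum_range_sub, sum_range_sub]
      simp [f, choose_succ_self]
    rw [this]
    refine sum_congr rfl fun k hk => ?_
    have : (n : ℝ) ≤ 2 * k := by exact_mod_cast (by simp at hk; omega : n ≤ 2 * k)
    rw [abs_of_nonpos (by linarith), mul_comm, neg_mul, hf]
  rw [hlow, hhigh]; ring

theorem two_pow_mul_sq_le (n : ℕ) :
    (2 ^ n * n) ^ 2 ≤ 2 * n * (2 * ((n + 1) / 2) * n.choose ((n + 1) / 2)) ^ 2 := by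
  obtain ⟨m, rfl | rfl⟩ := even_or_odd' n
  · rcases eq_zero_or_pos m with rfl | hm
    · simp
    have hh : (2 * m + 1) / 2 = m := by omega
    have hcore := four_pow_sq_le_four_mul_centralBinom_sq hm
    rw [hh, ← centralBinom_eq_two_mul_choose, pow_mul]
    calc ((2 ^ 2) ^ m * (2 * m)) ^ 2 = 4 * m ^ 2 * (4 ^ m) ^ 2 := by ring
      _ ≤ 4 * m ^ 2 * (4 * m * centralBinom m ^ 2) := by gcongr
      _ = _ := by ring
  · have hh : (2 * m + 1 + 1) / 2 = m + 1 := by omega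
    have hcb : centralBinom (m + 1) = 2 * (2 * m + 1).choose (m + 1) := by
      rw [centralBinom_eq_two_mul_choose, show 2 * (m + 1) = 2 * m + 1 + 1 by ring,
        choose_succ_succ', ← choose_symm_half]; ring
    have hcore := four_pow_sq_le_four_mul_centralBinom_sq (Nat.succ_pos m)
    rw [hcb, pow_succ 4 m] at hcore
    rw [hh, pow_succ 2 (2 * m), pow_mul]
    generalize (2 * m + 1).choose (m + 1) = c at hcore ⊢
    have hX : (4 ^ m) ^ 2 ≤ (m + 1) * c ^ 2 := by nlinarith
    calc ((2 ^ 2) ^ m * 2 * (2 * m + 1)) ^ 2 = 4 * (2 * m + 1) ^ 2 * (4 ^ m) ^ 2 := by ring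
      _ ≤ 4 * (2 * m + 1) ^ 2 * ((m + 1) * c ^ 2) := by gcongr
      _ ≤ 4 * (2 * m + 1) * (2 * (m + 1)) * ((m + 1) * c ^ 2) := by
        rw [sq (2 * m + 1), ← mul_assoc 4]; gcongr; omega
      _ = _ := by ring

theorem two_pow_mul_le_sqrt_mul_sum_choose_mul_abs (n : ℕ) :
    (2 ^ n * n : ℝ) ≤ √(2 * n) * ∑ k ∈ range (n + 1), (n.choose k : ℝ) * |(n : ℝ) - 2 * k| := by
  rw [sum_choose_mul_abs_sub_two_mul, ← abs_of_nonneg (by positivity : (0 : ℝ) ≤ 2 ^ n * n),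
    ← Real.sqrt_sq (by positivity : (0 : ℝ) ≤ 2 * ((n + 1) / 2 : ℕ) * n.choose ((n + 1) / 2)),
    ← Real.sqrt_mul (by positivity)]
  exact Real.abs_le_sqrt (by exact_mod_cast two_pow_mul_sq_le n)

end Nat

open scoped symmDiff
open SignType

theorem mul_sign_le_abs (x y : ℝ) : x * sign y ≤ |x| := by
  rcases lt_trichotomy y 0 with h | h | h <;> simp [h, neg_le_abs, le_abs_self]

section SignPattern

variable {ι : Type*} [DecidableEq ι]

/-- `A ↦ signPattern A` enumerates `{±1}^ι`, so a sum over `A : Finset ι` is `2 ^ card ι` times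
an expectation over independent uniform signs. -/
def signPattern (A : Finset ι) (b : ι) : ℝ := if b ∈ A then 1 else -1

theorem abs_signPattern (A : Finset ι) (b : ι) : |signPattern A b| = 1 := by
  unfold signPattern; split_ifs <;> simp

variable [Fintype ι]

theorem sum_signPattern (A : Finset ι) :
    ∑ b, signPattern A b = 2 * #A - Fintype.card ι := by
  have h b : signPattern A b = 2 * (if b ∈ A then 1 else 0) - 1 := by
    unfold signPattern; split_ifs <;> norm_num
  simp [h, sum_sub_distrib]
  ring

theorem sum_abs_sum_signPattern :
    ∑ A : Finset ι, |∑ b, signPattern A b| =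
      ∑ k ∈ range (Fintype.card ι + 1),
        ((Fintype.card ι).choose k : ℝ) * |(Fintype.card ι : ℝ) - 2 * k| := by
  simp_rw [sum_signPattern]
  rw [← powerset_univ, sum_powerset, card_univ]
  refine sum_congr rfl fun k _ => ?_
  rw [sum_congr rfl fun A hA => by rw [(mem_powersetCard.1 hA).2, abs_sub_comm], sum_const,
    card_powersetCard, card_univ, nsmul_eq_mul]

theorem signPattern_symmDiff (A C : Finset ι) (b : ι) :
    signPattern (A ∆ C) b = signPattern A b * signPattern Cᶜ b := by
  unfold signPattern
  by_cases b ∈ A <;> by_cases b ∈ C <;> simp [mem_symmDiff, *]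

theorem sum_abs_sum_mul_signPattern_eq_abs (m : ι → ℝ) :
    ∑ A : Finset ι, |∑ b, m b * signPattern A b| =
      ∑ A : Finset ι, |∑ b, |m b| * signPattern A b| := by
  set C := univ.filter fun b => m b < 0
  have hC b : m b * signPattern Cᶜ b = |m b| := by
    by_cases h : m b < 0 <;> simp [signPattern, C, h, abs_of_neg, abs_of_nonneg, not_lt.1]
  rw [← Equiv.sum_comp (symmDiff_left_involutive C).toPerm]
  refine sum_congr rfl fun A _ => ?_
  simp only [Function.Involutive.coe_toPerm, signPattern_symmDiff, ← hC]
  congr 1; exact sum_congr rfl fun b _ => by ring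

theorem sum_signPattern_mul_comp_sum_eq (F : ℝ → ℝ) (b b' : ι) :
    ∑ A : Finset ι, signPattern A b * F (∑ c, signPattern A c) =
      ∑ A : Finset ι, signPattern A b' * F (∑ c, signPattern A c) := by
  set σ := Equiv.swap b b' with hσ_def
  have hσ (A : Finset ι) (c : ι) : signPattern (A.map σ.toEmbedding) (σ c) = signPattern A c := by
    simp [signPattern]
  symm
  rw [← Equiv.sum_comp σ.finsetCongr]
  refine sum_congr rfl fun A _ => ?_
  have hb : signPattern (A.map σ.toEmbedding) b' = signPattern A b := by
    rw [← hσ A b, hσ_def, Equiv.swap_apply_left]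
  rw [Equiv.finsetCongr_apply, hb, ← Equiv.sum_comp σ (signPattern (A.map σ.toEmbedding))]
  simp only [hσ]

theorem sum_abs_mul_sum_abs_sum_signPattern_le (m : ι → ℝ) :
    (∑ b, |m b|) * ∑ A : Finset ι, |∑ b, signPattern A b| ≤
      Fintype.card ι * ∑ A : Finset ι, |∑ b, m b * signPattern A b| := by
  set c : ι → ℝ := fun b => ∑ A : Finset ι, signPattern A b * sign (∑ b', signPattern A b')
  have hc b b' : c b = c b' := sum_signPattern_mul_comp_sum_eq (fun x => (sign x : ℝ)) b b'
  have hT : ∑ A : Finset ι, |∑ b, signPattern A b| = ∑ b, c b := by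
    rw [sum_comm]
    exact sum_congr rfl fun A _ => by rw [← sum_mul, self_mul_sign]
  have hlow : ∑ b, |m b| * c b ≤ ∑ A : Finset ι, |∑ b, |m b| * signPattern A b| :=
    calc ∑ b, |m b| * c b
        = ∑ A : Finset ι, (∑ b, |m b| * signPattern A b) * sign (∑ b', signPattern A b') := by
          simp_rw [c, mul_sum, sum_mul, mul_assoc]; exact sum_comm
      _ ≤ _ := sum_le_sum fun A _ => mul_sign_le_abs _ _
  calc (∑ b, |m b|) * ∑ A : Finset ι, |∑ b, signPattern A b|
      = ∑ b, ∑ b' : ι, |m b| * c b := by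
        rw [hT, sum_mul_sum]; exact sum_congr rfl fun b _ => sum_congr rfl fun b' _ => by rw [hc]
    _ = Fintype.card ι * ∑ b, |m b| * c b := by simp [mul_sum]
    _ ≤ _ := by rw [sum_abs_sum_mul_signPattern_eq_abs]; gcongr

theorem two_pow_card_mul_sum_abs_le [Nonempty ι] (m : ι → ℝ) :
    2 ^ Fintype.card ι * ∑ b, |m b| ≤
      √(2 * Fintype.card ι) * ∑ A : Finset ι, |∑ b, m b * signPattern A b| := by
  set n := Fintype.card ι
  have hn : (0 : ℝ) < n := by exact_mod_cast Fintype.card_pos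
  have hbinom := Nat.two_pow_mul_le_sqrt_mul_sum_choose_mul_abs n
  rw [← sum_abs_sum_signPattern] at hbinom
  refine le_of_mul_le_mul_right ?_ hn
  calc 2 ^ n * (∑ b, |m b|) * n = (2 ^ n * n) * ∑ b, |m b| := by ring
    _ ≤ (√(2 * n) * ∑ A : Finset ι, |∑ b, signPattern A b|) * ∑ b, |m b| := by gcongr
    _ = √(2 * n) * ((∑ b, |m b|) * ∑ A : Finset ι, |∑ b, signPattern A b|) := by ring
    _ ≤ √(2 * n) * (n * ∑ A : Finset ι, |∑ b, m b * signPattern A b|) :=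
      mul_le_mul_of_nonneg_left (sum_abs_mul_sum_abs_sum_signPattern_le m) (Real.sqrt_nonneg _)
    _ = _ := by ring

end SignPattern

section Rectangles

variable {α ι : Type*} [Fintype α] [Fintype ι]

theorem exists_sum_abs_le_two_mul_abs_sum (d : α → ℝ) :
    ∃ S : Finset α, ∑ a, |d a| ≤ 2 * |∑ a ∈ S, d a| := by
  classical
  set P := univ.filter fun a => 0 ≤ d a
  have hsplit : ∑ a, |d a| = ∑ a ∈ P, d a - ∑ a ∈ Pᶜ, d a := by
    rw [← sum_add_sum_compl P, sub_eq_add_neg, ← sum_neg_distrib]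
    congr 1 <;> refine sum_congr rfl fun a ha => ?_
    · exact abs_of_nonneg (mem_filter.1 ha).2
    · exact abs_of_neg (by simpa [P] using ha)
  rcases le_total |∑ a ∈ Pᶜ, d a| |∑ a ∈ P, d a| with h | h
  · exact ⟨P, by linarith [le_abs_self (∑ a ∈ P, d a), neg_abs_le (∑ a ∈ Pᶜ, d a)]⟩
  · exact ⟨Pᶜ, by linarith [le_abs_self (∑ a ∈ P, d a), neg_abs_le (∑ a ∈ Pᶜ, d a)]⟩

theorem exists_sum_abs_sum_mul_le (M : α → ι → ℝ) {s : ι → ℝ} (hs : ∀ b, |s b| ≤ 1) :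
    ∃ (S : Finset α) (T : Finset ι),
      ∑ a, |∑ b, M a b * s b| ≤ 4 * |∑ a ∈ S, ∑ b ∈ T, M a b| := by
  obtain ⟨S, hS⟩ := exists_sum_abs_le_two_mul_abs_sum fun a => ∑ b, M a b * s b
  obtain ⟨T, hT⟩ := exists_sum_abs_le_two_mul_abs_sum fun b => ∑ a ∈ S, M a b
  refine ⟨S, T, ?_⟩
  calc ∑ a, |∑ b, M a b * s b| ≤ 2 * |∑ a ∈ S, ∑ b, M a b * s b| := hS
    _ = 2 * |∑ b, (∑ a ∈ S, M a b) * s b| := by rw [sum_comm]; simp_rw [sum_mul]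
    _ ≤ 2 * ∑ b, |∑ a ∈ S, M a b| := by
      gcongr
      refine (abs_sum_le_sum_abs _ _).trans (sum_le_sum fun b _ => ?_)
      rw [abs_mul]
      exact mul_le_of_le_one_right (abs_nonneg _) (hs b)
    _ ≤ 2 * (2 * |∑ b ∈ T, ∑ a ∈ S, M a b|) := by gcongr
    _ = 4 * |∑ a ∈ S, ∑ b ∈ T, M a b| := by rw [sum_comm]; ring

theorem exists_sum_abs_le_four_mul_sqrt_mul_abs_sum [Nonempty ι] (M : α → ι → ℝ) :
    ∃ (S : Finset α) (T : Finset ι), ∑ a, ∑ b, |M a b| ≤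
      4 * √(2 * Fintype.card ι) * |∑ a ∈ S, ∑ b ∈ T, M a b| := by
  classical
  obtain ⟨A, -, hA⟩ : ∃ A ∈ (univ : Finset (Finset ι)), ∑ a, ∑ b, |M a b| ≤
      √(2 * Fintype.card ι) * ∑ a, |∑ b, M a b * signPattern A b| := by
    refine exists_le_of_sum_le univ_nonempty ?_
    calc ∑ _A : Finset ι, ∑ a, ∑ b, |M a b| = ∑ a, 2 ^ Fintype.card ι * ∑ b, |M a b| := by
          simp [mul_sum]
      _ ≤ ∑ a, √(2 * Fintype.card ι) * ∑ A : Finset ι, |∑ b, M a b * signPattern A b| :=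
          sum_le_sum fun a _ => two_pow_card_mul_sum_abs_le (M a)
      _ = _ := by simp_rw [mul_sum]; exact sum_comm
  obtain ⟨S, T, hST⟩ := exists_sum_abs_sum_mul_le M fun b => (abs_signPattern A b).le
  exact ⟨S, T, hA.trans (by rw [mul_comm 4, mul_assoc]; gcongr)⟩

end Rectangles

section StepFunction

variable {α β ι κ : Type*} [MeasurableSpace α] [MeasurableSpace β]
  [Fintype ι] [MeasurableSpace ι] [DiscreteMeasurableSpace ι]
  [Fintype κ] [MeasurableSpace κ] [DiscreteMeasurableSpace κ]

theorem integral_comp_eq_sum_measureReal_preimage (μ : Measure α) [IsFiniteMeasure μ]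
    {φ : α → ι} (hφ : Measurable φ) (g : ι → ℝ) :
    ∫ x, g (φ x) ∂μ = ∑ c, μ.real (φ ⁻¹' {c}) * g c := by
  rw [← integral_map hφ.aemeasurable (Measurable.of_discrete).aestronglyMeasurable,
    integral_fintype Integrable.of_finite]
  simp_rw [map_measureReal_apply hφ (measurableSet_singleton _), smul_eq_mul]

theorem setIntegral_inter_preimage_comp_eq_sum (μ : Measure α) {X : Set α} (hX : μ X ≠ ⊤)
    {φ : α → ι} (hφ : Measurable φ) (S : Finset ι) (g : ι → ℝ) :
    ∫ x in X ∩ φ ⁻¹' S, g (φ x) ∂μ = ∑ c ∈ S, μ.real (X ∩ φ ⁻¹' {c}) * g c := by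
  have : IsFiniteMeasure (μ.restrict (X ∩ φ ⁻¹' S)) :=
    isFiniteMeasure_restrict.2 (measure_ne_top_of_subset Set.inter_subset_left hX)
  rw [integral_comp_eq_sum_measureReal_preimage _ hφ, ← sum_subset (subset_univ S)]
  · refine sum_congr rfl fun c hc => ?_
    rw [measureReal_restrict_apply (hφ (measurableSet_singleton c))]
    congr 2
    ext x
    simp only [Set.mem_inter_iff, Set.mem_preimage, Set.mem_singleton_iff, mem_coe]
    grind
  · intro c _ hc
    have : φ ⁻¹' {c} ∩ (X ∩ φ ⁻¹' S) = ∅ :=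
      Set.eq_empty_of_forall_notMem fun x hx => hc (hx.1 ▸ hx.2.2)
    rw [measureReal_restrict_apply (hφ (measurableSet_singleton c)), this, measureReal_empty,
      zero_mul]

theorem setIntegral_setIntegral_step_eq_sum (μ : Measure α) (ν : Measure β)
    {X : Set α} {Y : Set β} (hX : μ X ≠ ⊤) (hY : ν Y ≠ ⊤) {φ : α → ι} {ψ : β → κ}
    (hφ : Measurable φ) (hψ : Measurable ψ) (S : Finset ι) (T : Finset κ) (R : ι → κ → ℝ) :
    ∫ x in X ∩ φ ⁻¹' S, ∫ y in Y ∩ ψ ⁻¹' T, R (φ x) (ψ y) ∂ν ∂μ =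
      ∑ a ∈ S, ∑ b ∈ T, R a b * (μ.real (X ∩ φ ⁻¹' {a}) * ν.real (Y ∩ ψ ⁻¹' {b})) := by
  have hinner x := setIntegral_inter_preimage_comp_eq_sum ν hY hψ T (R (φ x))
  simp_rw [hinner]
  rw [setIntegral_inter_preimage_comp_eq_sum μ hX hφ S
    fun a => ∑ b ∈ T, ν.real (Y ∩ ψ ⁻¹' {b}) * R a b]
  simp_rw [mul_sum]
  refine sum_congr rfl fun a _ => sum_congr rfl fun b _ => by ring

theorem integral_integral_abs_step_eq_sum (μ : Measure α) (ν : Measure β)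
    {X : Set α} {Y : Set β} (hX : μ X ≠ ⊤) (hY : ν Y ≠ ⊤) {φ : α → ι} {ψ : β → κ}
    (hφ : Measurable φ) (hψ : Measurable ψ) (R : ι → κ → ℝ) :
    ∫ x in X, ∫ y in Y, |R (φ x) (ψ y)| ∂ν ∂μ =
      ∑ a, ∑ b, |R a b * (μ.real (X ∩ φ ⁻¹' {a}) * ν.real (Y ∩ ψ ⁻¹' {b}))| := by
  simpa [abs_mul, abs_of_nonneg measureReal_nonneg] using
    setIntegral_setIntegral_step_eq_sum μ ν hX hY hφ hψ univ univ fun a b => |R a b|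

end StepFunction

theorem abs_setIntegral_setIntegral_le {α β : Type*} [MeasurableSpace α] [MeasurableSpace β]
    {μ : Measure α} {ν : Measure β} {𝒳 : Set α} {𝒴 : Set β} (h𝒳 : μ 𝒳 ≠ ⊤) (h𝒴 : ν 𝒴 ≠ ⊤)
    {U : α → β → ℝ} (hU : ∀ x y, |U x y| ≤ 1) {X : Set α} {Y : Set β}
    (hX : X ⊆ 𝒳) (hY : Y ⊆ 𝒴) :
    |∫ x in X, ∫ y in Y, U x y ∂ν ∂μ| ≤ ν.real 𝒴 * μ.real 𝒳 := by
  have hinner x : ‖∫ y in Y, U x y ∂ν‖ ≤ ν.real 𝒴 :=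
    (norm_setIntegral_le_of_norm_le_const (measure_lt_top_of_subset hY h𝒴)
      fun y _ => hU x y).trans (by rw [one_mul]; gcongr)
  exact (norm_setIntegral_le_of_norm_le_const (measure_lt_top_of_subset hX h𝒳)
    fun x _ => hinner x).trans (by gcongr)

theorem abs_setIntegral_setIntegral_le_cutNormOn {𝒳 𝒴 : Set ℝ} (h𝒳 : volume 𝒳 ≠ ⊤)
    (h𝒴 : volume 𝒴 ≠ ⊤) {U : ℝ → ℝ → ℝ} (hU : ∀ x y, |U x y| ≤ 1) {X Y : Set ℝ}
    (hXm : MeasurableSet X) (hYm : MeasurableSet Y) (hX : X ⊆ 𝒳) (hY : Y ⊆ 𝒴) :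
    |∫ x in X, ∫ y in Y, U x y| ≤ cutNormOn 𝒳 𝒴 U := by
  refine le_csSup ⟨volume.real 𝒴 * volume.real 𝒳, ?_⟩ ⟨X, Y, hXm, hYm, hX, hY, rfl⟩
  rintro r ⟨X', Y', -, -, hX', hY', rfl⟩
  exact abs_setIntegral_setIntegral_le h𝒳 h𝒴 hU hX' hY'

/-- For a measurable `q₁ × q₂`-step kernel `U : 𝒳 × 𝒴 → [-1,1]` on bounded measurable
subsets of `ℝ`, the cut norm satisfies `‖U‖_□ ≥ (1/(4·√(2 q₂)))·‖U‖₁`. -/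
theorem step_kernel_cutNorm_ge_l1 {q₁ q₂ : ℕ} (𝒳 𝒴 : Set ℝ)
    (hX : MeasurableSet 𝒳) (hY : MeasurableSet 𝒴)
    (hXb : Bornology.IsBounded 𝒳) (hYb : Bornology.IsBounded 𝒴)
    (Q : Fin q₁ → Fin q₂ → ℝ) (hQ : ∀ a b, |Q a b| ≤ 1)
    (φ₁ : ℝ → Fin q₁) (φ₂ : ℝ → Fin q₂)
    (hφ₁ : Measurable φ₁) (hφ₂ : Measurable φ₂)
    (U : ℝ → ℝ → ℝ) (hU : ∀ x y, U x y = Q (φ₁ x) (φ₂ y)) :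
    (1 / (4 * Real.sqrt (2 * q₂))) * l1NormOn 𝒳 𝒴 U ≤ cutNormOn 𝒳 𝒴 U := by
  have : Nonempty (Fin q₂) := ⟨φ₂ 0⟩
  have h𝒳 : volume 𝒳 ≠ ⊤ := hXb.measure_lt_top.ne
  have h𝒴 : volume 𝒴 ≠ ⊤ := hYb.measure_lt_top.ne
  set M : Fin q₁ → Fin q₂ → ℝ := fun a b =>
    Q a b * (volume.real (𝒳 ∩ φ₁ ⁻¹' {a}) * volume.real (𝒴 ∩ φ₂ ⁻¹' {b}))
  obtain ⟨S, T, hST⟩ := exists_sum_abs_le_four_mul_sqrt_mul_abs_sum M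
  rw [Fintype.card_fin] at hST
  have hl1 : l1NormOn 𝒳 𝒴 U = ∑ a, ∑ b, |M a b| := by
    simp only [l1NormOn, hU]
    exact integral_integral_abs_step_eq_sum _ _ h𝒳 h𝒴 hφ₁ hφ₂ Q
  have hcut : |∑ a ∈ S, ∑ b ∈ T, M a b| ≤ cutNormOn 𝒳 𝒴 U := by
    rw [← setIntegral_setIntegral_step_eq_sum _ _ h𝒳 h𝒴 hφ₁ hφ₂ S T Q]
    simp_rw [← hU]
    exact abs_setIntegral_setIntegral_le_cutNormOn h𝒳 h𝒴 (fun x y => hU x y ▸ hQ _ _)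
      (hX.inter (hφ₁ .of_discrete)) (hY.inter (hφ₂ .of_discrete))
      Set.inter_subset_left Set.inter_subset_left
  have hpos : 0 < 4 * √(2 * q₂) := by
    have : (0 : ℝ) < q₂ := by exact_mod_cast (φ₂ 0).pos
    positivity
  rw [hl1, one_div, inv_mul_le_iff₀ hpos]
  exact hST.trans (by gcongr)
end

section
/- Let W : [0,1]² → [0,1] be a k-step kernel of the form W(x,y) = ∑_{a,b∈[k]} Q_{ab} 1_{S_a×T_b}(x,y), with Q ∈ [0,1]^{k×k} and (S_a), (T_b) measurable partitions of [0,1]. For every integer q₀ ≥ 2 there exists a q₀-step kernel W^{(ap)} : [0,1]² → [0,1] such that (i) W^{(ap)} is constant on each S_a × T_b, and (ii) ‖W − W^{(ap)}‖_□ ≤ C/√(log q₀) for a universal constant C. -/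
open MeasureTheory

/-!
Energy increment, as in Frieze–Kannan. Weight the block `(a, b)` by `|S a| |T b|`. Grouping rows
and columns into classes, the weighted block averages of `Q` over pairs of classes form a
conditional expectation; its weighted mean square, the energy, lies in `[0, 1]`. If a union of
rows `s` and a union of columns `t` see a discrepancy `> ε` between `Q` and this average, then
splitting every class along `s` and `t` raises the energy by more than `ε²`: the residual is
orthogonal to functions of the classes, so the discrepancy is an inner product with the energy
gain, and Cauchy–Schwarz applies. Hence after at most `⌊log₂ q₀⌋` splittings, i.e. with at most
`q₀` classes, the discrepancy is at most `ε = 2 / √(log q₀)`. The cut norm of a step kernel is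
the maximum of a bilinear function of the masses `|S a ∩ X|, |T b ∩ Y|`, so it is attained on
unions of blocks and the matrix bound is the kernel bound.
-/

namespace StepKernel

open Finset

section FiberAverage

variable {Ω γ γ' : Type*} [Fintype Ω] [DecidableEq γ] [DecidableEq γ']

-- On a fiber of weight zero the average is `0` (division by zero); such fibers carry no mass.
noncomputable def fiberAvg (w u : Ω → ℝ) (π : Ω → γ) (i : γ) : ℝ :=
  (∑ p with π p = i, w p * u p) / ∑ p with π p = i, w p

def weightedInner (w U V : Ω → ℝ) : ℝ := ∑ p, w p * (U p * V p)

noncomputable def energy (w u : Ω → ℝ) (π : Ω → γ) : ℝ :=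
  weightedInner w (fiberAvg w u π ∘ π) (fiberAvg w u π ∘ π)

variable {w : Ω → ℝ}

theorem weightedInner_sub_left (U U' V : Ω → ℝ) :
    weightedInner w (U - U') V = weightedInner w U V - weightedInner w U' V := by
  simp only [weightedInner, ← sum_sub_distrib, Pi.sub_apply, sub_mul, mul_sub]

theorem weightedInner_self_nonneg (hw : ∀ p, 0 ≤ w p) (U : Ω → ℝ) : 0 ≤ weightedInner w U U :=
  sum_nonneg fun p _ => mul_nonneg (hw p) (mul_self_nonneg _)

theorem sq_weightedInner_le (hw : ∀ p, 0 ≤ w p) (U V : Ω → ℝ) :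
    weightedInner w U V ^ 2 ≤ weightedInner w U U * weightedInner w V V :=
  sum_sq_le_sum_mul_sum_of_sq_le_mul _ (fun p _ => mul_nonneg (hw p) (mul_self_nonneg _))
    (fun p _ => mul_nonneg (hw p) (mul_self_nonneg _)) fun p _ => le_of_eq (by ring)

theorem weightedInner_self_le_sum (hw : ∀ p, 0 ≤ w p) {V : Ω → ℝ} (hV : ∀ p, V p ∈ Set.Icc 0 1) :
    weightedInner w V V ≤ ∑ p, w p :=
  sum_le_sum fun p _ =>
    mul_le_of_le_one_right (hw p) (mul_le_one₀ (hV p).2 (hV p).1 (hV p).2)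

theorem fiberAvg_mem_Icc (hw : ∀ p, 0 ≤ w p) {u : Ω → ℝ} (hu : ∀ p, u p ∈ Set.Icc 0 1)
    (π : Ω → γ) (i : γ) : fiberAvg w u π i ∈ Set.Icc 0 1 :=
  ⟨div_nonneg (sum_nonneg fun p _ => mul_nonneg (hw p) (hu p).1) (sum_nonneg fun p _ => hw p),
    div_le_one_of_le₀ (sum_le_sum fun p _ => mul_le_of_le_one_right (hw p) (hu p).2)
      (sum_nonneg fun p _ => hw p)⟩

theorem fiberAvg_mul_sum (hw : ∀ p, 0 ≤ w p) (u : Ω → ℝ) (π : Ω → γ) (i : γ) :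
    fiberAvg w u π i * ∑ p with π p = i, w p = ∑ p with π p = i, w p * u p := by
  by_cases h : ∑ p with π p = i, w p = 0
  · have hzero := (sum_eq_zero_iff_of_nonneg fun p _ => hw p).1 h
    rw [h, mul_zero, sum_eq_zero fun p hp => by rw [hzero p hp, zero_mul]]
  · exact div_mul_cancel₀ _ h

theorem fiberAvg_comp_apply (u : Ω → ℝ) (π : Ω → γ) {e : γ → γ'} (he : e.Injective) (i : γ) :
    fiberAvg w u (e ∘ π) (e i) = fiberAvg w u π i := by
  simp only [fiberAvg, Function.comp, he.eq_iff]

theorem weightedInner_sub_fiberAvg [Fintype γ] (hw : ∀ p, 0 ≤ w p) (u : Ω → ℝ) (π : Ω → γ)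
    (X : γ → ℝ) : weightedInner w (u - fiberAvg w u π ∘ π) (X ∘ π) = 0 := by
  rw [weightedInner, ← sum_fiberwise univ π]
  refine sum_eq_zero fun i _ => ?_
  calc ∑ p with π p = i, w p * ((u - fiberAvg w u π ∘ π) p * (X ∘ π) p)
      = (∑ p with π p = i, w p * u p - fiberAvg w u π i * ∑ p with π p = i, w p) * X i := by
        rw [mul_sum, ← sum_sub_distrib, sum_mul]
        refine sum_congr rfl fun p hp => ?_
        simp only [(mem_filter.1 hp).2, Pi.sub_apply, Function.comp]
        ring
    _ = 0 := by rw [fiberAvg_mul_sum hw, sub_self, zero_mul]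

theorem energy_le_sum (hw : ∀ p, 0 ≤ w p) {u : Ω → ℝ} (hu : ∀ p, u p ∈ Set.Icc 0 1)
    (π : Ω → γ) : energy w u π ≤ ∑ p, w p :=
  weightedInner_self_le_sum hw fun p => fiberAvg_mem_Icc hw hu π (π p)

variable [Fintype γ] [Fintype γ']

theorem energy_eq_energy_comp_add (hw : ∀ p, 0 ≤ w p) (u : Ω → ℝ) (π : Ω → γ') (F : γ' → γ) :
    energy w u π = energy w u (F ∘ π) +
      weightedInner w (fiberAvg w u π ∘ π - fiberAvg w u (F ∘ π) ∘ F ∘ π)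
        (fiberAvg w u π ∘ π - fiberAvg w u (F ∘ π) ∘ F ∘ π) := by
  set A' := fiberAvg w u π ∘ π
  set A := fiberAvg w u (F ∘ π) ∘ F ∘ π
  have hA : weightedInner w (u - A) A = 0 := weightedInner_sub_fiberAvg hw u (F ∘ π) _
  have hA' : weightedInner w (u - A') A = 0 :=
    weightedInner_sub_fiberAvg hw u π (fiberAvg w u (F ∘ π) ∘ F)
  have hcross : weightedInner w A' A' - weightedInner w A A - weightedInner w (A' - A) (A' - A) =
      2 * (weightedInner w (u - A) A - weightedInner w (u - A') A) := by
    simp only [weightedInner, ← sum_sub_distrib, mul_sum]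
    exact sum_congr rfl fun p _ => by simp only [Pi.sub_apply]; ring
  simp only [energy]
  linarith

theorem sq_weightedInner_sub_fiberAvg_le (hw : ∀ p, 0 ≤ w p) (hw1 : ∑ p, w p ≤ 1) (u : Ω → ℝ)
    (π : Ω → γ') (F : γ' → γ) {X : γ' → ℝ} (hX : ∀ i, X i ∈ Set.Icc 0 1) :
    weightedInner w (u - fiberAvg w u (F ∘ π) ∘ F ∘ π) (X ∘ π) ^ 2 ≤
      energy w u π - energy w u (F ∘ π) := by
  set A' := fiberAvg w u π ∘ π
  set A := fiberAvg w u (F ∘ π) ∘ F ∘ π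
  have hres : weightedInner w (u - A) (X ∘ π) = weightedInner w (A' - A) (X ∘ π) := by
    rw [← sub_eq_zero, ← weightedInner_sub_left, sub_sub_sub_cancel_right]
    exact weightedInner_sub_fiberAvg hw u π X
  have hV : weightedInner w (X ∘ π) (X ∘ π) ≤ 1 :=
    (weightedInner_self_le_sum hw fun p => hX (π p)).trans hw1
  calc weightedInner w (u - A) (X ∘ π) ^ 2
      ≤ weightedInner w (A' - A) (A' - A) * weightedInner w (X ∘ π) (X ∘ π) :=
        hres ▸ sq_weightedInner_le hw _ _
    _ ≤ weightedInner w (A' - A) (A' - A) :=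
        mul_le_of_le_one_right (weightedInner_self_nonneg hw _) hV
    _ = energy w u π - energy w u (F ∘ π) := by
        rw [energy_eq_energy_comp_add hw u π F]; ring

end FiberAverage

section CutNorm

variable {ι κ : Type*}

/-- The cut norm of the step kernel with value `D a b` on blocks of measure `μ a * ν b`, tested
on unions of whole blocks, is at most `ε`. -/
def CutNormLE (μ : ι → ℝ) (ν : κ → ℝ) (D : ι → κ → ℝ) (ε : ℝ) : Prop :=
  ∀ (s : Finset ι) (t : Finset κ), |∑ a ∈ s, μ a * ∑ b ∈ t, ν b * D a b| ≤ ε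

theorem sum_mul_sum_mul_comm (s : Finset ι) (t : Finset κ) (x : ι → ℝ) (y : κ → ℝ)
    (D : ι → κ → ℝ) :
    ∑ a ∈ s, x a * ∑ b ∈ t, y b * D a b = ∑ b ∈ t, y b * ∑ a ∈ s, x a * D a b := by
  simp only [mul_sum]
  rw [sum_comm]
  exact sum_congr rfl fun _ _ => sum_congr rfl fun _ _ => by ring

variable [Fintype ι] [Fintype κ]

theorem abs_sum_mul_le_of_forall_finset {w x c : ι → ℝ} {ε : ℝ}
    (hx : ∀ a, x a ∈ Set.Icc 0 (w a)) (h : ∀ s : Finset ι, |∑ a ∈ s, w a * c a| ≤ ε) :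
    |∑ a, x a * c a| ≤ ε := by
  refine abs_le.2 ⟨(abs_le.1 (h {a | c a < 0})).1.trans ?_,
    le_trans ?_ (abs_le.1 (h {a | 0 ≤ c a})).2⟩
  · rw [sum_filter]
    refine sum_le_sum fun a _ => ?_
    split_ifs with hc
    · exact mul_le_mul_of_nonpos_right (hx a).2 hc.le
    · exact mul_nonneg (hx a).1 (not_lt.1 hc)
  · rw [sum_filter]
    refine sum_le_sum fun a _ => ?_
    split_ifs with hc
    · exact mul_le_mul_of_nonneg_right (hx a).2 hc
    · exact mul_nonpos_of_nonneg_of_nonpos (hx a).1 (not_le.1 hc).le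

variable {μ : ι → ℝ} {ν : κ → ℝ}

theorem CutNormLE.abs_sum_mul_sum_le {D : ι → κ → ℝ} {ε : ℝ} (h : CutNormLE μ ν D ε)
    {x : ι → ℝ} {y : κ → ℝ} (hx : ∀ a, x a ∈ Set.Icc 0 (μ a)) (hy : ∀ b, y b ∈ Set.Icc 0 (ν b)) :
    |∑ a, x a * ∑ b, y b * D a b| ≤ ε := by
  refine abs_sum_mul_le_of_forall_finset hx fun s => ?_
  rw [sum_mul_sum_mul_comm]
  refine abs_sum_mul_le_of_forall_finset hy fun t => ?_
  rw [sum_mul_sum_mul_comm]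
  exact h s t

end CutNorm

theorem one_lt_log_mul_sq {q : ℕ} (hq : 2 ≤ q) :
    1 < (Nat.log 2 q : ℝ) * (2 / √(Real.log q)) ^ 2 := by
  have hm : (1 : ℝ) ≤ Nat.log 2 q := by exact_mod_cast Nat.log_pos one_lt_two hq
  have hlog : 0 < Real.log q := Real.log_pos (by exact_mod_cast hq)
  have hlt : Real.log q < Nat.log 2 q + 1 :=
    calc Real.log q < Real.log ((2 : ℕ) ^ (Nat.log 2 q + 1) : ℕ) :=
          Real.log_lt_log (by positivity) (by exact_mod_cast Nat.lt_pow_succ_log_self one_lt_two q)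
      _ = (Nat.log 2 q + 1) * Real.log 2 := by push_cast; rw [Real.log_pow]; push_cast; ring
      _ < Nat.log 2 q + 1 := by
          have := Real.log_two_lt_d9
          nlinarith
  rw [div_pow, Real.sq_sqrt hlog.le, mul_div_assoc', lt_div_iff₀ hlog]
  linarith

section Rectangles

variable {ι κ : Type*}

def prodWeight (μ : ι → ℝ) (ν : κ → ℝ) (p : ι × κ) : ℝ := μ p.1 * ν p.2

theorem prodWeight_nonneg {μ : ι → ℝ} {ν : κ → ℝ} (hμ : ∀ a, 0 ≤ μ a) (hν : ∀ b, 0 ≤ ν b)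
    (p : ι × κ) : 0 ≤ prodWeight μ ν p :=
  mul_nonneg (hμ p.1) (hν p.2)

variable [Fintype ι] [Fintype κ]

noncomputable def blockAvg {α β : Type*} [DecidableEq α] [DecidableEq β] (μ : ι → ℝ) (ν : κ → ℝ)
    (Q : ι → κ → ℝ) (f : ι → α) (g : κ → β) (a : ι) (b : κ) : ℝ :=
  fiberAvg (prodWeight μ ν) (Function.uncurry Q) (Prod.map f g) (f a, g b)

variable {μ : ι → ℝ} {ν : κ → ℝ}

theorem weightedInner_prodWeight_rect [DecidableEq ι] [DecidableEq κ] (D : ι → κ → ℝ) (s : Finset ι)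
    (t : Finset κ) :
    weightedInner (prodWeight μ ν) (Function.uncurry D)
        (fun p => if p.1 ∈ s ∧ p.2 ∈ t then 1 else 0) =
      ∑ a ∈ s, μ a * ∑ b ∈ t, ν b * D a b := by
  simp only [weightedInner, Fintype.sum_prod_type, prodWeight, Function.uncurry_apply_pair,
    mul_ite, mul_one, mul_zero, ite_and]
  simp only [sum_ite_irrel, sum_const_zero, sum_ite_mem, univ_inter, mul_sum, mul_assoc]

theorem sum_prodWeight_le_one (hμ1 : ∑ a, μ a ≤ 1) (hν : ∀ b, 0 ≤ ν b) (hν1 : ∑ b, ν b ≤ 1) :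
    ∑ p, prodWeight μ ν p ≤ 1 := by
  simp only [Fintype.sum_prod_type, prodWeight, ← sum_mul_sum]
  exact mul_le_one₀ hμ1 (sum_nonneg fun b _ => hν b) hν1

def snocMem [DecidableEq ι] {n : ℕ} (f : ι → Fin n → Bool) (s : Finset ι) (a : ι) :
    Fin (n + 1) → Bool :=
  Fin.snoc (f a) (decide (a ∈ s))

variable [DecidableEq ι] [DecidableEq κ]

theorem sq_rectSum_le_energy_snocMem (hμ : ∀ a, 0 ≤ μ a) (hν : ∀ b, 0 ≤ ν b)
    (hμ1 : ∑ a, μ a ≤ 1) (hν1 : ∑ b, ν b ≤ 1) (Q : ι → κ → ℝ) {n : ℕ}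
    (f : ι → Fin n → Bool) (g : κ → Fin n → Bool) (s : Finset ι) (t : Finset κ) :
    (∑ a ∈ s, μ a * ∑ b ∈ t, ν b * (Q a b - blockAvg μ ν Q f g a b)) ^ 2 ≤
      energy (prodWeight μ ν) (Function.uncurry Q) (Prod.map (snocMem f s) (snocMem g t)) -
        energy (prodWeight μ ν) (Function.uncurry Q) (Prod.map f g) := by
  have hcoarse : Prod.map Fin.init Fin.init ∘ Prod.map (snocMem f s) (snocMem g t) =
      Prod.map f g := by
    funext ⟨a, b⟩
    simp [snocMem]
  have hrect : (fun l : (Fin (n + 1) → Bool) × (Fin (n + 1) → Bool) =>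
        if l.1 (Fin.last n) ∧ l.2 (Fin.last n) then (1 : ℝ) else 0) ∘
        Prod.map (snocMem f s) (snocMem g t) =
      fun p => if p.1 ∈ s ∧ p.2 ∈ t then 1 else 0 := by
    funext p
    simp [snocMem]
  have key := sq_weightedInner_sub_fiberAvg_le (prodWeight_nonneg hμ hν)
    (sum_prodWeight_le_one hμ1 hν hν1) (Function.uncurry Q)
    (Prod.map (snocMem f s) (snocMem g t)) (Prod.map Fin.init Fin.init)
    (X := fun l => if l.1 (Fin.last n) ∧ l.2 (Fin.last n) then 1 else 0)
    (fun l => by split_ifs <;> simp)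
  rw [hrect, hcoarse] at key
  rwa [← weightedInner_prodWeight_rect]

theorem exists_energy_ge (hμ : ∀ a, 0 ≤ μ a) (hν : ∀ b, 0 ≤ ν b) (hμ1 : ∑ a, μ a ≤ 1)
    (hν1 : ∑ b, ν b ≤ 1) (Q : ι → κ → ℝ) {ε : ℝ} (hε : 0 ≤ ε) : ∀ m : ℕ,
    (∀ n ≤ m, ∀ (f : ι → Fin n → Bool) (g : κ → Fin n → Bool),
      ¬ CutNormLE μ ν (fun a b => Q a b - blockAvg μ ν Q f g a b) ε) →
    ∃ (f : ι → Fin m → Bool) (g : κ → Fin m → Bool),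
      m * ε ^ 2 ≤ energy (prodWeight μ ν) (Function.uncurry Q) (Prod.map f g)
  | 0, _ => ⟨fun _ => Fin.elim0, fun _ => Fin.elim0, by
      rw [Nat.cast_zero, zero_mul]
      exact weightedInner_self_nonneg (prodWeight_nonneg hμ hν) _⟩
  | m + 1, hbad => by
    obtain ⟨f, g, hfg⟩ := exists_energy_ge hμ hν hμ1 hν1 Q hε m fun n hn => hbad n (by omega)
    obtain ⟨s, t, hst⟩ : ∃ s t,
        ε < |∑ a ∈ s, μ a * ∑ b ∈ t, ν b * (Q a b - blockAvg μ ν Q f g a b)| := by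
      simpa [CutNormLE] using hbad m (by omega) f g
    refine ⟨snocMem f s, snocMem g t, ?_⟩
    have hinc := sq_rectSum_le_energy_snocMem hμ hν hμ1 hν1 Q f g s t
    have hsq := pow_lt_pow_left₀ hst hε two_ne_zero
    rw [sq_abs] at hsq
    push_cast
    linarith

theorem exists_cutNormLE_blockAvg (hμ : ∀ a, 0 ≤ μ a) (hν : ∀ b, 0 ≤ ν b)
    (hμ1 : ∑ a, μ a ≤ 1) (hν1 : ∑ b, ν b ≤ 1) {Q : ι → κ → ℝ} (hQ : ∀ a b, Q a b ∈ Set.Icc 0 1)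
    {ε : ℝ} (hε : 0 ≤ ε) {m : ℕ} (hm : 1 < m * ε ^ 2) :
    ∃ n ≤ m, ∃ (f : ι → Fin n → Bool) (g : κ → Fin n → Bool),
      CutNormLE μ ν (fun a b => Q a b - blockAvg μ ν Q f g a b) ε := by
  by_contra! hbad
  obtain ⟨f, g, hfg⟩ := exists_energy_ge hμ hν hμ1 hν1 Q hε m hbad
  have hle := (energy_le_sum (prodWeight_nonneg hμ hν) (u := Function.uncurry Q)
    (fun p => hQ p.1 p.2) (Prod.map f g)).trans (sum_prodWeight_le_one hμ1 hν hν1)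
  linarith

theorem exists_cutNormLE_fin (hμ : ∀ a, 0 ≤ μ a) (hν : ∀ b, 0 ≤ ν b)
    (hμ1 : ∑ a, μ a ≤ 1) (hν1 : ∑ b, ν b ≤ 1) {Q : ι → κ → ℝ} (hQ : ∀ a b, Q a b ∈ Set.Icc 0 1)
    {q : ℕ} (hq : 2 ≤ q) :
    ∃ (F : ι → Fin q) (G : κ → Fin q) (R : Fin q → Fin q → ℝ), (∀ i j, R i j ∈ Set.Icc 0 1) ∧
      CutNormLE μ ν (fun a b => Q a b - R (F a) (G b)) (2 / √(Real.log q)) := by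
  obtain ⟨n, hn, f, g, hfg⟩ :=
    exists_cutNormLE_blockAvg hμ hν hμ1 hν1 hQ (by positivity) (one_lt_log_mul_sq hq)
  have hcard : Fintype.card (Fin n → Bool) ≤ Fintype.card (Fin q) := by
    simpa using (Nat.pow_le_pow_right two_pos hn).trans (Nat.pow_log_le_self 2 (by omega))
  obtain ⟨e⟩ := Function.Embedding.nonempty_of_card_le hcard
  set π := Prod.map (e ∘ f) (e ∘ g)
  refine ⟨e ∘ f, e ∘ g, fun i j => fiberAvg (prodWeight μ ν) (Function.uncurry Q) π (i, j),
    fun i j => fiberAvg_mem_Icc (prodWeight_nonneg hμ hν) (fun p => hQ p.1 p.2) π (i, j), ?_⟩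
  have hR : ∀ a b, fiberAvg (prodWeight μ ν) (Function.uncurry Q) π (e (f a), e (g b)) =
      blockAvg μ ν Q f g a b := fun a b =>
    fiberAvg_comp_apply _ (Prod.map f g) (e.injective.prodMap e.injective) (f a, g b)
  simpa only [Function.comp_apply, hR] using hfg

end Rectangles

section Blocks

variable {α ι : Type*} {S : ι → Set α}

theorem eq_of_mem_of_mem (hd : Pairwise (Function.onFun Disjoint S)) {x : α} {a b : ι}
    (ha : x ∈ S a) (hb : x ∈ S b) : a = b :=
  hd.eq (Set.not_disjoint_iff.2 ⟨x, ha, hb⟩)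

theorem sum_indicator_one_mul_of_mem [Fintype ι] (hd : Pairwise (Function.onFun Disjoint S))
    {x : α} {a : ι} (hx : x ∈ S a) (c : ι → ℝ) : ∑ b, (S b).indicator 1 x * c b = c a := by
  rw [sum_eq_single a (fun b _ hb => ?_) (by simp), Set.indicator_of_mem hx, Pi.one_apply, one_mul]
  rw [Set.indicator_of_notMem fun h => hb (eq_of_mem_of_mem hd h hx), zero_mul]

variable [MeasurableSpace α]

theorem exists_measurable_eq_of_mem [MeasurableSpace ι] [Countable ι] [Nonempty ι]
    (hS : ∀ a, MeasurableSet (S a)) (hd : Pairwise (Function.onFun Disjoint S)) :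
    ∃ φ : α → ι, Measurable φ ∧ ∀ a, ∀ x ∈ S a, φ x = a := by
  classical
  let φ : α → ι := fun x => if h : ∃ a, x ∈ S a then h.choose else Classical.arbitrary ι
  have hφ : ∀ a, ∀ x ∈ S a, φ x = a := fun a x hx => by
    have h : ∃ a, x ∈ S a := ⟨a, hx⟩
    simp only [φ, dif_pos h]
    exact eq_of_mem_of_mem hd h.choose_spec hx
  refine ⟨φ, measurable_to_countable' fun a => ?_, hφ⟩
  have hpre : φ ⁻¹' {a} = S a ∪ (⋂ b, (S b)ᶜ) ∩ {_x | Classical.arbitrary ι = a} := by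
    ext x
    by_cases h : ∃ b, x ∈ S b
    · obtain ⟨b, hb⟩ := h
      have : x ∈ S a ↔ b = a := ⟨eq_of_mem_of_mem hd hb, fun h => h ▸ hb⟩
      have hU : ¬∀ i, x ∉ S i := fun h => h b hb
      simp [hφ b x hb, this, hU]
    · have hφx : φ x = Classical.arbitrary ι := dif_neg h
      have hU : ∀ i, x ∉ S i := fun i hi => h ⟨i, hi⟩
      simp [hφx, hU]
  rw [hpre]
  exact (hS a).union ((MeasurableSet.iInter fun b => (hS b).compl).inter (MeasurableSet.const _))

theorem setIntegral_eq_sum_of_forall_mem [Fintype ι] {μ : Measure α}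
    (hS : ∀ a, MeasurableSet (S a)) (hd : Pairwise (Function.onFun Disjoint S)) {X : Set α}
    (hX : MeasurableSet X) (hXS : X ⊆ ⋃ a, S a) (hXfin : μ X ≠ ⊤) {f : α → ℝ} {c : ι → ℝ}
    (hf : ∀ a, ∀ x ∈ S a, f x = c a) : ∫ x in X, f x ∂μ = ∑ a, μ.real (S a ∩ X) * c a := by
  have hpiece : ∀ a, MeasurableSet (S a ∩ X) := fun a => (hS a).inter hX
  have hconst : ∀ a, Set.EqOn f (fun _ => c a) (S a ∩ X) := fun a x hx => hf a x hx.1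
  calc ∫ x in X, f x ∂μ = ∫ x in ⋃ a, S a ∩ X, f x ∂μ := by
        rw [← Set.iUnion_inter, Set.inter_eq_right.2 hXS]
    _ = ∑ a, ∫ x in S a ∩ X, f x ∂μ :=
        integral_iUnion_fintype hpiece
          (fun a b hab => (hd hab).mono Set.inter_subset_left Set.inter_subset_left)
          fun a => (integrableOn_const (measure_ne_top_of_subset Set.inter_subset_right
            hXfin)).congr_fun (hconst a).symm (hpiece a)
    _ = ∑ a, μ.real (S a ∩ X) * c a := by
        simp only [setIntegral_congr_fun (hpiece _) (hconst _), setIntegral_const, smul_eq_mul]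

theorem setIntegral_setIntegral_eq_sum {β κ : Type*} [MeasurableSpace β] [Fintype ι] [Fintype κ]
    {T : κ → Set β} {μ : Measure α} {ν : Measure β}
    (hS : ∀ a, MeasurableSet (S a)) (hSd : Pairwise (Function.onFun Disjoint S))
    (hT : ∀ b, MeasurableSet (T b)) (hTd : Pairwise (Function.onFun Disjoint T))
    {X : Set α} {Y : Set β}
    (hX : MeasurableSet X) (hXS : X ⊆ ⋃ a, S a) (hXfin : μ X ≠ ⊤)
    (hY : MeasurableSet Y) (hYT : Y ⊆ ⋃ b, T b) (hYfin : ν Y ≠ ⊤)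
    {U : α → β → ℝ} {D : ι → κ → ℝ} (hU : ∀ a b, ∀ x ∈ S a, ∀ y ∈ T b, U x y = D a b) :
    ∫ x in X, ∫ y in Y, U x y ∂ν ∂μ = ∑ a, μ.real (S a ∩ X) * ∑ b, ν.real (T b ∩ Y) * D a b :=
  setIntegral_eq_sum_of_forall_mem hS hSd hX hXS hXfin fun a x hx =>
    setIntegral_eq_sum_of_forall_mem hT hTd hY hYT hYfin fun b y hy => hU a b x hx y hy

theorem sum_measureReal_eq_of_iUnion_eq [Fintype ι] {μ : Measure α}
    (hS : ∀ a, MeasurableSet (S a)) (hd : Pairwise (Function.onFun Disjoint S)) {𝒳 : Set α}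
    (hS𝒳 : ⋃ a, S a = 𝒳) (h𝒳 : μ 𝒳 ≠ ⊤) : ∑ a, μ.real (S a) = μ.real 𝒳 := by
  rw [← hS𝒳, measureReal_iUnion_fintype hd hS fun a =>
    measure_ne_top_of_subset (hS𝒳 ▸ Set.subset_iUnion S a) h𝒳]

end Blocks

theorem cutNormOn_le_of_cutNormLE {ι κ : Type*} [Fintype ι] [Fintype κ] {S : ι → Set ℝ}
    {T : κ → Set ℝ} {𝒳 𝒴 : Set ℝ} (hS : ∀ a, MeasurableSet (S a))
    (hSd : Pairwise (Function.onFun Disjoint S)) (hS𝒳 : ⋃ a, S a = 𝒳)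
    (hT : ∀ b, MeasurableSet (T b)) (hTd : Pairwise (Function.onFun Disjoint T))
    (hT𝒴 : ⋃ b, T b = 𝒴) (h𝒳 : volume 𝒳 ≠ ⊤) (h𝒴 : volume 𝒴 ≠ ⊤) {D : ι → κ → ℝ} {ε : ℝ}
    (hε : 0 ≤ ε) (hD : CutNormLE (fun a => volume.real (S a)) (fun b => volume.real (T b)) D ε)
    {U : ℝ → ℝ → ℝ} (hU : ∀ a b, ∀ x ∈ S a, ∀ y ∈ T b, U x y = D a b) :
    cutNormOn 𝒳 𝒴 U ≤ ε := by
  refine Real.sSup_le ?_ hε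
  rintro _ ⟨X, Y, hX, hY, hX𝒳, hY𝒴, rfl⟩
  rw [setIntegral_setIntegral_eq_sum hS hSd hT hTd hX (hS𝒳 ▸ hX𝒳)
    (measure_ne_top_of_subset hX𝒳 h𝒳) hY (hT𝒴 ▸ hY𝒴) (measure_ne_top_of_subset hY𝒴 h𝒴) hU]
  exact hD.abs_sum_mul_sum_le
    (fun a => ⟨measureReal_nonneg, measureReal_mono Set.inter_subset_left
      (measure_ne_top_of_subset (hS𝒳 ▸ Set.subset_iUnion S a) h𝒳)⟩)
    (fun b => ⟨measureReal_nonneg, measureReal_mono Set.inter_subset_left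
      (measure_ne_top_of_subset (hT𝒴 ▸ Set.subset_iUnion T b) h𝒴)⟩)

end StepKernel

open StepKernel Finset

/-- Weak regularity lemma for step kernels: a `k`-step kernel `W : [0,1]² → [0,1]` can
be approximated in cut norm, within `C/√(log q₀)`, by a `q₀`-step kernel which is
constant on each block `S a × T b` of the original partition. -/
theorem weak_regularity_step_kernel :
    ∃ C : ℝ, 0 < C ∧
      ∀ (k q₀ : ℕ), 2 ≤ q₀ →
      ∀ (Q : Fin k → Fin k → ℝ), (∀ a b, Q a b ∈ Set.Icc (0:ℝ) 1) →
      ∀ (S T : Fin k → Set ℝ),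
        (∀ a, MeasurableSet (S a)) → (∀ b, MeasurableSet (T b)) →
        Pairwise (Function.onFun Disjoint S) → Pairwise (Function.onFun Disjoint T) →
        (⋃ a, S a) = Set.Icc (0:ℝ) 1 → (⋃ b, T b) = Set.Icc (0:ℝ) 1 →
      ∀ (W : ℝ → ℝ → ℝ),
        (∀ x y, W x y =
          ∑ a, ∑ b, Set.indicator (S a) 1 x * Set.indicator (T b) 1 y * Q a b) →
      ∃ (Wap : ℝ → ℝ → ℝ) (ψ₁ ψ₂ : ℝ → Fin q₀) (Qap : Fin q₀ → Fin q₀ → ℝ),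
        Measurable ψ₁ ∧ Measurable ψ₂ ∧
        (∀ x y, Wap x y = Qap (ψ₁ x) (ψ₂ y)) ∧
        (∀ x y, Wap x y ∈ Set.Icc (0:ℝ) 1) ∧
        (∀ a b, ∀ x ∈ S a, ∀ x' ∈ S a, ∀ y ∈ T b, ∀ y' ∈ T b, Wap x y = Wap x' y') ∧
        cutNormOn (Set.Icc 0 1) (Set.Icc 0 1) (fun x y => W x y - Wap x y) ≤
          C / Real.sqrt (Real.log q₀) := by
  refine ⟨2, two_pos, fun k q₀ hq Q hQ S T hSm hTm hSd hTd hSU hTU W hW => ?_⟩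
  have hI : volume (Set.Icc (0 : ℝ) 1) ≠ ⊤ := measure_Icc_lt_top.ne
  have hμ1 : ∑ a, volume.real (S a) ≤ 1 :=
    (sum_measureReal_eq_of_iUnion_eq hSm hSd hSU hI).trans_le (by simp)
  have hν1 : ∑ b, volume.real (T b) ≤ 1 :=
    (sum_measureReal_eq_of_iUnion_eq hTm hTd hTU hI).trans_le (by simp)
  obtain ⟨F, G, R, hR, hcut⟩ := exists_cutNormLE_fin (fun _ => measureReal_nonneg)
    (fun _ => measureReal_nonneg) hμ1 hν1 hQ hq
  have := (Set.nonempty_iUnion.1 (hSU ▸ Set.nonempty_Icc.2 zero_le_one)).nonempty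
  obtain ⟨φ, hφm, hφ⟩ := exists_measurable_eq_of_mem hSm hSd
  obtain ⟨χ, hχm, hχ⟩ := exists_measurable_eq_of_mem hTm hTd
  refine ⟨fun x y => R (F (φ x)) (G (χ y)), F ∘ φ, G ∘ χ, R, (measurable_of_countable F).comp hφm,
    (measurable_of_countable G).comp hχm, fun _ _ => rfl, fun _ _ => hR _ _, ?_, ?_⟩
  · intro a b x hx x' hx' y hy y' hy'
    simp only [hφ a x hx, hφ a x' hx', hχ b y hy, hχ b y' hy']
  · refine cutNormOn_le_of_cutNormLE hSm hSd hSU hTm hTd hTU hI hI (by positivity) hcut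
      fun a b x hx y hy => ?_
    simp only [hW, mul_assoc, ← mul_sum, sum_indicator_one_mul_of_mem hTd hy,
      sum_indicator_one_mul_of_mem hSd hx, hφ a x hx, hχ b y hy]
end

section
/- Let W be a k-step kernel on [0,u]×[0,v] with W(x,y) = Q_{φ₁(x),φ₂(y)}, Q ∈ ℝ^{k×k}, and set α_a = λ(φ₁⁻¹(a)), β_b = λ(φ₂⁻¹(b)). For R ⊆ [k] define R^{l,W} = {b : ∑_{a∈R} α_a Q_{ab} > 0}, R^{r,W} = {a : ∑_{b∈R} β_b Q_{ab} > 0}, and W[S,T] = ∑_{a∈S,b∈T} α_a β_b Q_{ab}. Then for every integer 1 ≤ q ≤ k, the one-sided cut norm ‖W‖_□⁺ = sup_{X⊆[0,u],Y⊆[0,v]} ∫_{X×Y} W satisfies ‖W‖_□⁺ ≤ max over R₁,R₂⊆[k] with |R₁|,|R₂| ≤ q of W[R₂^{r,W}, R₁^{l,W}] + (u·√(k·∑_a β_a²) + v·√(k·∑_a α_a²))/√q. -/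
open MeasureTheory
open scoped Classical

/-- One-sided cut norm of a kernel over `[0,u] × [0,v]` (no absolute value). -/
noncomputable def oneSidedCutNorm (u v : ℝ) (W : ℝ → ℝ → ℝ) : ℝ :=
  sSup {r : ℝ | ∃ X Y : Set ℝ, MeasurableSet X ∧ MeasurableSet Y ∧
    X ⊆ Set.Icc 0 u ∧ Y ⊆ Set.Icc 0 v ∧ r = ∫ x in X, ∫ y in Y, W x y}

/-- The weighted block sum `W[S,T] = ∑_{a∈S, b∈T} α_a β_b Q_{ab}`. -/
noncomputable def blockSum {k : ℕ} (α β : Fin k → ℝ) (Q : Fin k → Fin k → ℝ)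
    (S T : Finset (Fin k)) : ℝ :=
  ∑ a ∈ S, ∑ b ∈ T, α a * β b * Q a b

/-- `R^{l,W} = {b : ∑_{a∈R} α_a Q_{ab} > 0}`. -/
noncomputable def leftSet {k : ℕ} (α : Fin k → ℝ) (Q : Fin k → Fin k → ℝ)
    (R : Finset (Fin k)) : Finset (Fin k) :=
  Finset.univ.filter fun b => 0 < ∑ a ∈ R, α a * Q a b

/-- `R^{r,W} = {a : ∑_{b∈R} β_b Q_{ab} > 0}`. -/
noncomputable def rightSet {k : ℕ} (β : Fin k → ℝ) (Q : Fin k → Fin k → ℝ)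
    (R : Finset (Fin k)) : Finset (Fin k) :=
  Finset.univ.filter fun a => 0 < ∑ b ∈ R, β b * Q a b

/-!
With `x a = λ(X ∩ φ₁⁻¹{a})` and `y b = λ(Y ∩ φ₂⁻¹{b})` the cut integral is the bilinear sum
`∑ x_a y_b Q_{ab}` with `0 ≤ x ≤ α`, `0 ≤ y ≤ β`. Raising `x` to `α` on the rows with positive
row sum and deleting the other rows can only increase it, and likewise for columns. It remains to
replace the selecting set `T^{r}` by `R^{r}` for some `q`-subset `R ⊆ T`. Choosing by the sign of
`∑_{b∈R} β_b Q_{ab}` instead of `∑_{b∈T} β_b Q_{ab}` loses at most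
`|∑_{b∈T} - (|T|/q) ∑_{b∈R}|` on row `a`, and for a uniformly random `q`-subset `R` the second
moment of this deviation is at most `(|T|/q) ∑_{b∈T} (β_b Q_{ab})² ≤ (k/q) ∑ β²` (sampling
without replacement). Some `R` does at least as well as the average; doing this once for the
columns and once for the rows gives the two error terms.
-/

namespace Finset

lemma sum_sum_eq_sum_card_filter_nsmul {κ ι M : Type*} [AddCommMonoid M] {𝓡 : Finset κ}
    {S : Finset ι} {T : κ → Finset ι} (hT : ∀ R ∈ 𝓡, T R ⊆ S) (f : ι → M) :
    ∑ R ∈ 𝓡, ∑ a ∈ T R, f a = ∑ a ∈ S, #{R ∈ 𝓡 | a ∈ T R} • f a := by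
  rw [sum_comm' (t' := S) (s' := fun a => {R ∈ 𝓡 | a ∈ T R})]
  · simp only [sum_const]
  · intro R a
    simp only [mem_filter]
    exact ⟨fun h => ⟨⟨h.1, h.2⟩, hT R h.1 h.2⟩, fun h => h.1⟩

variable {ι : Type*} {S : Finset ι} {q : ℕ}

lemma card_mul_card_filter_powersetCard_mem {a : ι} (ha : a ∈ S) :
    #S * #{R ∈ S.powersetCard q | a ∈ R} = q * (#S).choose q := by
  obtain _ | q := q
  · simp
  obtain ⟨s, hs⟩ : ∃ s, #S = s + 1 := ⟨#S - 1, (Nat.sub_add_cancel (card_pos.2 ⟨a, ha⟩)).symm⟩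
  simp_rw [← singleton_subset_iff (a := a)]
  rw [card_filter_powersetCard_subset _ _ _ (singleton_subset_iff.2 ha) (by simp), card_singleton,
    hs, Nat.add_sub_cancel, Nat.add_sub_cancel, Nat.add_one_mul_choose_eq, mul_comm]

lemma card_mul_sub_one_mul_card_filter_powersetCard_mem_mem {a b : ι} (ha : a ∈ S) (hb : b ∈ S)
    (hab : a ≠ b) :
    #S * (#S - 1) * #{R ∈ S.powersetCard q | a ∈ R ∧ b ∈ R} = q * (q - 1) * (#S).choose q := by
  have hpair : #{a, b} = 2 := card_pair hab
  obtain hq | hq := lt_or_ge q 2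
  · have : #{R ∈ S.powersetCard q | a ∈ R ∧ b ∈ R} = 0 := by
      refine card_eq_zero.2 (filter_eq_empty_iff.2 fun R hR hab' => ?_)
      have := card_le_card (insert_subset_iff.2 ⟨hab'.1, singleton_subset_iff.2 hab'.2⟩)
      rw [hpair, (mem_powersetCard.1 hR).2] at this
      omega
    interval_cases q <;> simp [this]
  obtain ⟨s, hs⟩ : ∃ s, #S = s + 2 :=
    ⟨#S - 2, by have := card_le_card (insert_subset_iff.2 ⟨ha, singleton_subset_iff.2 hb⟩); omega⟩
  obtain ⟨q, rfl⟩ : ∃ q', q = q' + 2 := ⟨q - 2, by omega⟩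
  have hsub : {a, b} ⊆ S := insert_subset_iff.2 ⟨ha, singleton_subset_iff.2 hb⟩
  simp_rw [← singleton_subset_iff (a := b), ← insert_subset_iff]
  rw [card_filter_powersetCard_subset _ _ _ hsub (by omega), hpair, hs]
  simp only [add_tsub_cancel_right, Nat.add_succ_sub_one]
  rw [mul_assoc, Nat.add_one_mul_choose_eq, ← mul_assoc, Nat.add_one_mul_choose_eq]
  ring

lemma cast_card_mul_sub_one_mul_card_filter_powersetCard_mem_mem {a b : ι} (ha : a ∈ S)
    (hb : b ∈ S) :
    (#S : ℝ) * (#S - 1) * #{R ∈ S.powersetCard q | a ∈ R ∧ b ∈ R}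
      = q * (q - 1) * (#S).choose q + if a = b then ((#S : ℝ) - q) * q * (#S).choose q else 0 := by
  have hS : (1 : ℝ) ≤ #S := by exact_mod_cast card_pos.2 ⟨a, ha⟩
  split_ifs with hab
  · subst hab
    have h := congrArg (Nat.cast (R := ℝ)) (card_mul_card_filter_powersetCard_mem (q := q) ha)
    simp only [and_self]
    push_cast at h
    linear_combination ((#S : ℝ) - 1) * h
  · have h := congrArg (Nat.cast (R := ℝ))
      (card_mul_sub_one_mul_card_filter_powersetCard_mem_mem (q := q) ha hb hab)
    rcases q with _ | q
    · simp_all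
    · push_cast [Nat.cast_sub (card_pos.2 ⟨a, ha⟩)] at h
      simpa using h

lemma card_mul_sum_powersetCard_sum (c : ι → ℝ) :
    (#S : ℝ) * ∑ R ∈ S.powersetCard q, ∑ a ∈ R, c a = q * (#S).choose q * ∑ a ∈ S, c a := by
  rw [sum_sum_eq_sum_card_filter_nsmul (fun R hR => (mem_powersetCard.1 hR).1), mul_sum, mul_sum]
  refine sum_congr rfl fun a ha => ?_
  have h := congrArg (Nat.cast (R := ℝ)) (card_mul_card_filter_powersetCard_mem (q := q) ha)
  push_cast at h
  rw [nsmul_eq_mul, ← mul_assoc, h]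

lemma card_mul_sub_one_mul_sum_powersetCard_sq (c : ι → ℝ) :
    (#S : ℝ) * (#S - 1) * ∑ R ∈ S.powersetCard q, (∑ a ∈ R, c a) ^ 2
      = q * (#S).choose q * ((#S - q) * ∑ a ∈ S, c a ^ 2 + (q - 1) * (∑ a ∈ S, c a) ^ 2) := by
  set N : ℝ := ↑((#S).choose q)
  have hsq : ∀ R : Finset ι, (∑ a ∈ R, c a) ^ 2 = ∑ p ∈ R ×ˢ R, c p.1 * c p.2 := fun R => by
    rw [sq, sum_mul_sum, sum_product]
  calc (#S : ℝ) * (#S - 1) * ∑ R ∈ S.powersetCard q, (∑ a ∈ R, c a) ^ 2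
      = ∑ a ∈ S, ∑ b ∈ S,
          (q * (q - 1) * N + if a = b then ((#S : ℝ) - q) * q * N else 0) * (c a * c b) := by
        rw [sum_congr rfl fun R _ => hsq R, sum_sum_eq_sum_card_filter_nsmul (S := S ×ˢ S)
          (fun R hR => product_subset_product (mem_powersetCard.1 hR).1
            (mem_powersetCard.1 hR).1), mul_sum, sum_product]
        refine sum_congr rfl fun a ha => sum_congr rfl fun b hb => ?_
        simp_rw [nsmul_eq_mul, ← mul_assoc, mem_product]
        rw [cast_card_mul_sub_one_mul_card_filter_powersetCard_mem_mem ha hb]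
    _ = q * (q - 1) * N * (∑ a ∈ S, c a) ^ 2 + ((#S : ℝ) - q) * q * N * ∑ a ∈ S, c a ^ 2 := by
        simp only [add_mul, sum_add_distrib, ite_mul, zero_mul, sum_ite_eq, sum_ite_mem,
          inter_self, ← mul_sum, sq, ← sum_mul]
    _ = _ := by ring

theorem sum_powersetCard_sq_sub_le (hq : 1 ≤ q) (hqS : q < #S) (c : ι → ℝ) :
    ∑ R ∈ S.powersetCard q, ((q : ℝ) * ∑ a ∈ S, c a - #S * ∑ a ∈ R, c a) ^ 2
      ≤ (#S).choose q * q * #S * ∑ a ∈ S, c a ^ 2 := by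
  have hs : (1 : ℝ) < #S := by exact_mod_cast hq.trans_lt hqS
  have hqs : (q : ℝ) ≤ #S := by exact_mod_cast hqS.le
  have hq' : (1 : ℝ) ≤ q := by exact_mod_cast hq
  have h₁ := card_mul_sum_powersetCard_sum (S := S) (q := q) c
  have h₂ := card_mul_sub_one_mul_sum_powersetCard_sq (S := S) (q := q) c
  set s : ℝ := ↑(#S)
  set N : ℝ := ↑((#S).choose q)
  set σ := ∑ a ∈ S, c a
  set P := ∑ a ∈ S, c a ^ 2
  have hgap : (s - 1) * (N * q * s * P)
      - (s - 1) * ∑ R ∈ S.powersetCard q, ((q : ℝ) * σ - s * ∑ a ∈ R, c a) ^ 2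
      = q * N * ((s - q) * σ ^ 2 + s * (q - 1) * P) := by
    simp only [sub_sq, sum_add_distrib, sum_sub_distrib, sum_const, card_powersetCard,
      nsmul_eq_mul, ← mul_sum, mul_pow]
    linear_combination (2 * q * (s - 1) * σ) * h₁ - s * h₂
  have hgap₀ : 0 ≤ q * N * ((s - q) * σ ^ 2 + s * (q - 1) * P) :=
    mul_nonneg (by positivity) (add_nonneg (mul_nonneg (sub_nonneg.2 hqs) (sq_nonneg σ))
      (mul_nonneg (mul_nonneg (by positivity) (sub_nonneg.2 hq'))
        (sum_nonneg fun a _ => sq_nonneg (c a))))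
  refine le_of_mul_le_mul_left ?_ (sub_pos.2 hs)
  linarith

theorem sum_powersetCard_abs_sub_le (hq : 1 ≤ q) (hqS : q < #S) (c : ι → ℝ) :
    ∑ R ∈ S.powersetCard q, |∑ a ∈ S, c a - #S / q * ∑ a ∈ R, c a|
      ≤ (#S).choose q * (√(#S * ∑ a ∈ S, c a ^ 2) / √q) := by
  have hq₀ : (0 : ℝ) < q := by exact_mod_cast hq
  have hdiv : ∀ R : Finset ι, ∑ a ∈ S, c a - #S / q * ∑ a ∈ R, c a
      = ((q : ℝ) * ∑ a ∈ S, c a - #S * ∑ a ∈ R, c a) / q := fun R => by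
    field_simp
  rw [← pow_le_pow_iff_left₀ (sum_nonneg fun R _ => abs_nonneg _) (by positivity) two_ne_zero]
  calc (∑ R ∈ S.powersetCard q, |∑ a ∈ S, c a - #S / q * ∑ a ∈ R, c a|) ^ 2
      ≤ (#S).choose q * ∑ R ∈ S.powersetCard q, (∑ a ∈ S, c a - #S / q * ∑ a ∈ R, c a) ^ 2 := by
        simpa only [sq_abs, card_powersetCard] using
          sq_sum_le_card_mul_sum_sq (s := S.powersetCard q)
            (f := fun R => |∑ a ∈ S, c a - #S / q * ∑ a ∈ R, c a|)
    _ = (#S).choose q / q ^ 2 *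
          ∑ R ∈ S.powersetCard q, ((q : ℝ) * ∑ a ∈ S, c a - #S * ∑ a ∈ R, c a) ^ 2 := by
        simp only [hdiv, div_pow, ← sum_div]
        ring
    _ ≤ (#S).choose q / q ^ 2 * ((#S).choose q * q * #S * ∑ a ∈ S, c a ^ 2) := by
        gcongr
        exact sum_powersetCard_sq_sub_le hq hqS c
    _ = ((#S).choose q * (√(#S * ∑ a ∈ S, c a ^ 2) / √q)) ^ 2 := by
        rw [mul_pow, div_pow, Real.sq_sqrt (by positivity), Real.sq_sqrt hq₀.le]
        field_simp

end Finset

open Finset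

lemma ite_pos_le_ite_pos_add_abs_sub {f g r : ℝ} (hr : 0 < r) :
    (if 0 < f then f else 0) ≤ (if 0 < g then f else 0) + |f - r * g| := by
  have hrg := mul_pos_iff_of_pos_left hr (b := g)
  split_ifs with hf hg hg
  · linarith [abs_nonneg (f - r * g)]
  · linarith [le_abs_self (f - r * g), not_lt.1 (hrg.not.2 hg)]
  · linarith [neg_abs_le (f - r * g), hrg.2 hg]
  · simp

theorem exists_subset_card_le_sum_filter_le {ι κ : Type*} [Fintype κ] {q : ℕ} (hq : 1 ≤ q)
    (S : Finset ι) (M : ι → κ → ℝ) {w : κ → ℝ} (hw : ∀ b, 0 ≤ w b) {D : ℝ}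
    (hD : ∀ b, ∑ a ∈ S, M a b ^ 2 ≤ D) :
    ∃ R ⊆ S, #R ≤ q ∧
      ∑ b with 0 < ∑ a ∈ S, M a b, w b * ∑ a ∈ S, M a b
        ≤ ∑ b with 0 < ∑ a ∈ R, M a b, w b * ∑ a ∈ S, M a b + (∑ b, w b) * √(#S * D) / √q := by
  obtain hSq | hqS := le_or_gt #S q
  · exact ⟨S, subset_rfl, hSq, le_add_of_nonneg_right <|
      div_nonneg (mul_nonneg (sum_nonneg fun b _ => hw b) (Real.sqrt_nonneg _))
        (Real.sqrt_nonneg _)⟩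
  have hq₀ : (0 : ℝ) < q := by exact_mod_cast hq
  have hs₀ : (0 : ℝ) < #S := by exact_mod_cast (zero_lt_one.trans_le hq).trans hqS
  have hdev : ∀ b, ∑ R ∈ S.powersetCard q, |∑ a ∈ S, M a b - #S / q * ∑ a ∈ R, M a b|
      ≤ (#S).choose q * (√(#S * D) / √q) := fun b =>
    (sum_powersetCard_abs_sub_le hq hqS (M · b)).trans (by gcongr; exact hD b)
  obtain ⟨R, hR, hRε⟩ := exists_le_of_sum_le (powersetCard_nonempty.2 hqS.le)
    (f := fun R => ∑ b, w b * |∑ a ∈ S, M a b - #S / q * ∑ a ∈ R, M a b|)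
    (g := fun _ => (∑ b, w b) * (√(#S * D) / √q)) <| by
      calc ∑ R ∈ S.powersetCard q, ∑ b, w b * |∑ a ∈ S, M a b - #S / q * ∑ a ∈ R, M a b|
          = ∑ b, w b * ∑ R ∈ S.powersetCard q, |∑ a ∈ S, M a b - #S / q * ∑ a ∈ R, M a b| := by
            rw [sum_comm]; simp only [mul_sum]
        _ ≤ ∑ b, w b * ((#S).choose q * (√(#S * D) / √q)) := by gcongr with b; exacts [hw b, hdev b]
        _ = ∑ R ∈ S.powersetCard q, (∑ b, w b) * (√(#S * D) / √q) := by
            rw [sum_const, card_powersetCard, nsmul_eq_mul, ← sum_mul]; ring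
  refine ⟨R, (mem_powersetCard.1 hR).1, (mem_powersetCard.1 hR).2.le, ?_⟩
  rw [sum_filter, sum_filter, mul_div_assoc]
  calc ∑ b, (if 0 < ∑ a ∈ S, M a b then w b * ∑ a ∈ S, M a b else 0)
      ≤ ∑ b, ((if 0 < ∑ a ∈ R, M a b then w b * ∑ a ∈ S, M a b else 0)
          + w b * |∑ a ∈ S, M a b - #S / q * ∑ a ∈ R, M a b|) := by
        gcongr with b
        simpa only [mul_ite, mul_zero, mul_add] using
          mul_le_mul_of_nonneg_left (ite_pos_le_ite_pos_add_abs_sub (div_pos hs₀ hq₀)) (hw b)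
    _ ≤ _ := by rw [sum_add_distrib]; gcongr

section BlockSum

variable {k q : ℕ} {α β : Fin k → ℝ} {Q : Fin k → Fin k → ℝ}

lemma blockSum_eq_sum_mul_sum (S T : Finset (Fin k)) :
    blockSum α β Q S T = ∑ a ∈ S, α a * ∑ b ∈ T, β b * Q a b := by
  simp only [blockSum, mul_sum, mul_assoc]

lemma blockSum_swap (S T : Finset (Fin k)) :
    blockSum β α (Function.swap Q) T S = blockSum α β Q S T := by
  simp only [blockSum, Function.swap]
  rw [sum_comm]
  simp only [mul_comm (β _)]

lemma leftSet_eq_rightSet_swap (R : Finset (Fin k)) :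
    leftSet α Q R = rightSet α (Function.swap Q) R :=
  rfl

lemma blockSum_le_blockSum_rightSet {x : Fin k → ℝ} {S : Finset (Fin k)} (hα : ∀ a, 0 ≤ α a)
    (hx₀ : ∀ a ∈ S, 0 ≤ x a) (hxα : ∀ a ∈ S, x a ≤ α a) (T : Finset (Fin k)) :
    blockSum x β Q S T ≤ blockSum α β Q (rightSet β Q T) T := by
  rw [blockSum_eq_sum_mul_sum, blockSum_eq_sum_mul_sum, rightSet, sum_filter]
  calc ∑ a ∈ S, x a * ∑ b ∈ T, β b * Q a b
      ≤ ∑ a ∈ S, if 0 < ∑ b ∈ T, β b * Q a b then α a * ∑ b ∈ T, β b * Q a b else 0 := by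
        gcongr with a ha
        split_ifs with hpos
        · exact mul_le_mul_of_nonneg_right (hxα a ha) hpos.le
        · exact mul_nonpos_of_nonneg_of_nonpos (hx₀ a ha) (not_lt.1 hpos)
    _ ≤ _ := by
        refine sum_le_sum_of_subset_of_nonneg (subset_univ S) fun a _ _ => ?_
        split_ifs with hpos
        exacts [mul_nonneg (hα a) hpos.le, le_rfl]

lemma exists_blockSum_rightSet_le (hq : 1 ≤ q) (hα : ∀ a, 0 ≤ α a) (hQ : ∀ a b, |Q a b| ≤ 1)
    (T : Finset (Fin k)) :
    ∃ R ⊆ T, #R ≤ q ∧ blockSum α β Q (rightSet β Q T) T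
      ≤ blockSum α β Q (rightSet β Q R) T + (∑ a, α a) * √(k * ∑ b, β b ^ 2) / √q := by
  have hD : ∀ a, ∑ b ∈ T, (β b * Q a b) ^ 2 ≤ ∑ b, β b ^ 2 := fun a =>
    calc ∑ b ∈ T, (β b * Q a b) ^ 2 ≤ ∑ b ∈ T, β b ^ 2 := sum_le_sum fun b _ => by
          rw [mul_pow]
          exact mul_le_of_le_one_right (sq_nonneg _) ((sq_le_one_iff_abs_le_one _).2 (hQ a b))
      _ ≤ ∑ b, β b ^ 2 := sum_le_univ_sum_of_nonneg fun b => sq_nonneg _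
  obtain ⟨R, hRT, hRq, hR⟩ := exists_subset_card_le_sum_filter_le hq T _ hα hD
  refine ⟨R, hRT, hRq, ?_⟩
  simp only [blockSum_eq_sum_mul_sum, rightSet]
  refine hR.trans (add_le_add_right ?_ _)
  have hT : (#T : ℝ) ≤ k := by exact_mod_cast (card_le_univ T).trans (Fintype.card_fin k).le
  have hα' : 0 ≤ ∑ a, α a := sum_nonneg fun a _ => hα a
  gcongr

lemma exists_blockSum_le_blockSum_rightSet_add {x : Fin k → ℝ} {S : Finset (Fin k)} (hq : 1 ≤ q)
    (hQ : ∀ a b, |Q a b| ≤ 1) (hα : ∀ a, 0 ≤ α a) (hx₀ : ∀ a ∈ S, 0 ≤ x a)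
    (hxα : ∀ a ∈ S, x a ≤ α a) (T : Finset (Fin k)) :
    ∃ R ⊆ T, #R ≤ q ∧ blockSum x β Q S T
      ≤ blockSum α β Q (rightSet β Q R) T + (∑ a, α a) * √(k * ∑ b, β b ^ 2) / √q :=
  let ⟨R, hRT, hRq, hR⟩ := exists_blockSum_rightSet_le hq hα hQ T
  ⟨R, hRT, hRq, (blockSum_le_blockSum_rightSet hα hx₀ hxα T).trans hR⟩

theorem exists_blockSum_le_blockSum_rightSet_leftSet_add {x y : Fin k → ℝ} (hq : 1 ≤ q)
    (hQ : ∀ a b, |Q a b| ≤ 1) (hα : ∀ a, 0 ≤ α a) (hβ : ∀ b, 0 ≤ β b)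
    (hx₀ : ∀ a, 0 ≤ x a) (hxα : ∀ a, x a ≤ α a) (hy₀ : ∀ b, 0 ≤ y b) (hyβ : ∀ b, y b ≤ β b) :
    ∃ R₁ R₂ : Finset (Fin k), #R₁ ≤ q ∧ #R₂ ≤ q ∧
      blockSum x y Q univ univ ≤ blockSum α β Q (rightSet β Q R₂) (leftSet α Q R₁) +
        ((∑ a, α a) * √(k * ∑ b, β b ^ 2) + (∑ b, β b) * √(k * ∑ a, α a ^ 2)) / √q := by
  set S₀ := rightSet y Q univ
  have h₀ : blockSum x y Q univ univ ≤ blockSum α y Q S₀ univ :=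
    blockSum_le_blockSum_rightSet hα (fun a _ => hx₀ a) (fun a _ => hxα a) univ
  obtain ⟨R₁, -, hR₁, h₁⟩ := exists_blockSum_le_blockSum_rightSet_add (α := β) (β := α)
    (Q := Function.swap Q) (S := univ) hq (fun b a => hQ a b) hβ (fun b _ => hy₀ b)
    (fun b _ => hyβ b) S₀
  rw [blockSum_swap (Q := Q), blockSum_swap (Q := Q), ← leftSet_eq_rightSet_swap] at h₁
  obtain ⟨R₂, -, hR₂, h₂⟩ := exists_blockSum_le_blockSum_rightSet_add (β := β) (S := S₀) hq hQ hα
    (fun a _ => hα a) (fun a _ => le_rfl) (leftSet α Q R₁)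
  refine ⟨R₁, R₂, hR₁, hR₂, ?_⟩
  rw [add_div]
  linarith

end BlockSum

section StepFunction

variable {X ι : Type*} [MeasurableSpace X] [Fintype ι] [MeasurableSpace ι]
  [MeasurableSingletonClass ι] {μ : Measure X} {φ : X → ι} {A : Set X}

lemma setIntegral_comp_eq_sum (hφ : Measurable φ) (hμA : μ A ≠ ⊤) (F : ι → ℝ) :
    ∫ x in A, F (φ x) ∂μ = ∑ a, μ.real (φ ⁻¹' {a} ∩ A) * F a := by
  have : IsFiniteMeasure (μ.restrict A) := isFiniteMeasure_restrict.2 hμA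
  rw [← integral_map hφ.aemeasurable (measurable_of_finite F).aestronglyMeasurable,
    integral_fintype Integrable.of_finite]
  simp only [map_measureReal_apply hφ (measurableSet_singleton _),
    measureReal_restrict_apply (hφ (measurableSet_singleton _)), smul_eq_mul]

lemma sum_measureReal_preimage_singleton_inter (hφ : Measurable φ) (hμA : μ A ≠ ⊤) :
    ∑ a, μ.real (φ ⁻¹' {a} ∩ A) = μ.real A := by
  simpa using (setIntegral_comp_eq_sum hφ hμA fun _ => (1 : ℝ)).symm

lemma sum_volume_real_preimage_singleton_inter_Icc {φ : ℝ → ι} (hφ : Measurable φ) {c : ℝ}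
    (hc : 0 ≤ c) : ∑ a, volume.real (φ ⁻¹' {a} ∩ Set.Icc 0 c) = c := by
  rw [sum_measureReal_preimage_singleton_inter hφ measure_Icc_lt_top.ne,
    Real.volume_real_Icc_of_le hc, sub_zero]

end StepFunction

lemma setIntegral_setIntegral_comp_eq_blockSum {X Y : Type*} [MeasurableSpace X]
    [MeasurableSpace Y] {μ : Measure X} {ν : Measure Y} {k : ℕ} {φ₁ : X → Fin k} {φ₂ : Y → Fin k}
    (hφ₁ : Measurable φ₁) (hφ₂ : Measurable φ₂) {A : Set X} {B : Set Y} (hμA : μ A ≠ ⊤)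
    (hνB : ν B ≠ ⊤) (Q : Fin k → Fin k → ℝ) :
    ∫ x in A, ∫ y in B, Q (φ₁ x) (φ₂ y) ∂ν ∂μ
      = blockSum (fun a => μ.real (φ₁ ⁻¹' {a} ∩ A)) (fun b => ν.real (φ₂ ⁻¹' {b} ∩ B)) Q
          univ univ := by
  simp_rw [setIntegral_comp_eq_sum hφ₂ hνB (Q _)]
  rw [setIntegral_comp_eq_sum hφ₁ hμA fun a => ∑ b, ν.real (φ₂ ⁻¹' {b} ∩ B) * Q a b]
  simp only [blockSum, mul_sum]
  ring_nf

theorem oneSidedCutNorm_le_q_subsets_general {k q : ℕ} (hq : 1 ≤ q)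
    (u v : ℝ) (hu : 0 ≤ u) (hv : 0 ≤ v)
    (Q : Fin k → Fin k → ℝ) (hQ : ∀ a b, |Q a b| ≤ 1)
    (φ₁ φ₂ : ℝ → Fin k) (hφ₁ : Measurable φ₁) (hφ₂ : Measurable φ₂)
    (W : ℝ → ℝ → ℝ) (hW : ∀ x y, W x y = Q (φ₁ x) (φ₂ y))
    (α β : Fin k → ℝ)
    (hα : ∀ a, α a = (volume (φ₁ ⁻¹' {a} ∩ Set.Icc 0 u)).toReal)
    (hβ : ∀ b, β b = (volume (φ₂ ⁻¹' {b} ∩ Set.Icc 0 v)).toReal) :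
    oneSidedCutNorm u v W ≤
      sSup {r : ℝ | ∃ R₁ R₂ : Finset (Fin k), R₁.card ≤ q ∧ R₂.card ≤ q ∧
          r = blockSum α β Q (rightSet β Q R₂) (leftSet α Q R₁)} +
        (u * Real.sqrt (k * ∑ a, (β a) ^ 2) + v * Real.sqrt (k * ∑ a, (α a) ^ 2)) /
          Real.sqrt q := by
  have hIcc {c : ℝ} : volume (Set.Icc 0 c) ≠ ⊤ := measure_Icc_lt_top.ne
  have hsumα : ∑ a, α a = u := by
    simpa only [hα, ← measureReal_def] using sum_volume_real_preimage_singleton_inter_Icc hφ₁ hu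
  have hsumβ : ∑ b, β b = v := by
    simpa only [hβ, ← measureReal_def] using sum_volume_real_preimage_singleton_inter_Icc hφ₂ hv
  have hbdd : BddAbove {r : ℝ | ∃ R₁ R₂ : Finset (Fin k), R₁.card ≤ q ∧ R₂.card ≤ q ∧
      r = blockSum α β Q (rightSet β Q R₂) (leftSet α Q R₁)} :=
    ((Set.finite_range fun R : Finset (Fin k) × Finset (Fin k) =>
      blockSum α β Q (rightSet β Q R.2) (leftSet α Q R.1)).subset
        (by rintro _ ⟨R₁, R₂, -, -, rfl⟩; exact ⟨(R₁, R₂), rfl⟩)).bddAbove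
  refine csSup_le ⟨0, ∅, ∅, by simp⟩ ?_
  rintro _ ⟨X, Y, -, -, hXu, hYv, rfl⟩
  obtain ⟨R₁, R₂, hR₁, hR₂, hle⟩ := exists_blockSum_le_blockSum_rightSet_leftSet_add hq hQ
    (x := fun a => volume.real (φ₁ ⁻¹' {a} ∩ X)) (y := fun b => volume.real (φ₂ ⁻¹' {b} ∩ Y))
    (fun a => hα a ▸ ENNReal.toReal_nonneg) (fun b => hβ b ▸ ENNReal.toReal_nonneg)
    (fun a => measureReal_nonneg) (fun a => hα a ▸ measureReal_mono
      (Set.inter_subset_inter_right _ hXu) (measure_inter_ne_top_of_right_ne_top hIcc))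
    (fun b => measureReal_nonneg) (fun b => hβ b ▸ measureReal_mono
      (Set.inter_subset_inter_right _ hYv) (measure_inter_ne_top_of_right_ne_top hIcc))
  simp_rw [hW]
  rw [setIntegral_setIntegral_comp_eq_blockSum hφ₁ hφ₂
    (measure_ne_top_of_subset hXu hIcc) (measure_ne_top_of_subset hYv hIcc)]
  rw [hsumα, hsumβ] at hle
  exact hle.trans (add_le_add_left (le_csSup hbdd ⟨R₁, R₂, hR₁, hR₂, rfl⟩) _)

/-- Bound on the one-sided cut norm of a `k`-step kernel in terms of block sums
indexed by subsets of size at most `q`. -/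
theorem oneSidedCutNorm_le_q_subsets {k q : ℕ} (hq : 1 ≤ q) (hqk : q ≤ k)
    (u v : ℝ) (hu : 0 ≤ u) (hv : 0 ≤ v)
    (Q : Fin k → Fin k → ℝ) (hQ : ∀ a b, |Q a b| ≤ 1)
    (φ₁ φ₂ : ℝ → Fin k) (hφ₁ : Measurable φ₁) (hφ₂ : Measurable φ₂)
    (W : ℝ → ℝ → ℝ) (hW : ∀ x y, W x y = Q (φ₁ x) (φ₂ y))
    (α β : Fin k → ℝ)
    (hα : ∀ a, α a = (volume (φ₁ ⁻¹' {a} ∩ Set.Icc 0 u)).toReal)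
    (hβ : ∀ b, β b = (volume (φ₂ ⁻¹' {b} ∩ Set.Icc 0 v)).toReal) :
    oneSidedCutNorm u v W ≤
      sSup {r : ℝ | ∃ R₁ R₂ : Finset (Fin k), R₁.card ≤ q ∧ R₂.card ≤ q ∧
          r = blockSum α β Q (rightSet β Q R₂) (leftSet α Q R₁)} +
        (u * Real.sqrt (k * ∑ a, (β a) ^ 2) + v * Real.sqrt (k * ∑ a, (α a) ^ 2)) /
          Real.sqrt q :=
  oneSidedCutNorm_le_q_subsets_general hq u v hu hv Q hQ φ₁ φ₂ hφ₁ hφ₂ W hW α β hα hβ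
end

section
/- Let Θ₀ ∈ [0,1]^{n×n} be a symmetric matrix with zero diagonal, and let A be a random symmetric 0/1 adjacency matrix whose entries A_{ij} (i<j) are independent Bernoulli with parameters (Θ₀)_{ij}, A_{ii}=0. Then E‖A − Θ₀‖_□ ≤ 12·√((‖Θ₀‖₁ + n)/n³), where ‖Θ₀‖₁ = ∑_{ij}|(Θ₀)_{ij}| and ‖·‖_□ is the normalized matrix cut norm. -/
/-!
By symmetry and the zero diagonals, every cut sum `∑_{i ∈ S, j ∈ T} (A - Θ₀)_{ij}` is a sum of
the independent centred Bernoulli variables `A_{ij} - Θ₀_{ij}`, `i < j`, with weights in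
`[0, 2]`. A centred Bernoulli(`θ`) variable satisfies `E exp (r (W - θ)) ≤ exp (θ r²)` for
`|r| ≤ 1`, so every cut sum has mgf at most `exp (4 s² ‖Θ₀‖₁)` for `|s| ≤ 1/2`.
If `E exp (±t X_k) ≤ exp B` for each of `N` variables, then `E max_k |X_k| ≤ (log (2N) + B) / t`;
for the `4ⁿ` cut sums and `t = √n / (2 √(‖Θ₀‖₁ + n))` this is the claim.
-/

open MeasureTheory ProbabilityTheory

/-- Normalized cut norm of an `n × n` real matrix. -/
noncomputable def matCutNorm {n : ℕ} (B : Matrix (Fin n) (Fin n) ℝ) : ℝ :=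
  (1 / (n : ℝ) ^ 2) * ⨆ S : Finset (Fin n), ⨆ T : Finset (Fin n),
    |∑ i ∈ S, ∑ j ∈ T, B i j|

/-- Entrywise ℓ¹ norm of a matrix. -/
noncomputable def matL1Norm {n : ℕ} (B : Matrix (Fin n) (Fin n) ℝ) : ℝ :=
  ∑ i, ∑ j, |B i j|

open Finset Real

def pairWeight {ι : Type*} [DecidableEq ι] (S T : Finset ι) (p : ι × ι) : ℝ :=
  (if p.1 ∈ S ∧ p.2 ∈ T then 1 else 0) + (if p.2 ∈ S ∧ p.1 ∈ T then 1 else 0)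

theorem abs_pairWeight_le_two {ι : Type*} [DecidableEq ι] (S T : Finset ι) (p : ι × ι) :
    |pairWeight S T p| ≤ 2 := by
  unfold pairWeight; split_ifs <;> norm_num

theorem sum_sum_eq_sum_pairWeight_mul {ι : Type*} [Fintype ι] [LinearOrder ι]
    {B : Matrix ι ι ℝ} (hB : B.IsSymm) (hd : ∀ i, B i i = 0) (S T : Finset ι) :
    ∑ i ∈ S, ∑ j ∈ T, B i j =
      ∑ q : {p : ι × ι // p.1 < p.2}, pairWeight S T q.1 * B q.1.1 q.1.2 := by
  set g : ι × ι → ℝ := fun p => if p.1 ∈ S ∧ p.2 ∈ T then B p.1 p.2 else 0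
  have hST : ∑ i ∈ S, ∑ j ∈ T, B i j = ∑ p, g p := by
    simp [g, Fintype.sum_prod_type, ite_and]
  have hsplit : ∀ p : ι × ι,
      g p = (if p.1 < p.2 then g p else 0) + (if p.1 < p.2 then 0 else g p) := by
    intro p; split_ifs <;> simp
  have hswap : ∑ p : ι × ι, (if p.1 < p.2 then 0 else g p) =
      ∑ p : ι × ι, (if p.1 < p.2 then g p.swap else 0) := by
    rw [← (Equiv.prodComm ι ι).sum_comp]
    refine sum_congr rfl fun p _ => ?_
    rcases lt_trichotomy p.1 p.2 with h | h | h
    · simp [h, h.not_gt]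
    · simp [h, g, hd]
    · simp [h, h.not_gt]
  have hpair : ∀ p : ι × ι, g p + g p.swap = pairWeight S T p * B p.1 p.2 := by
    intro p
    simp only [g, pairWeight, Prod.fst_swap, Prod.snd_swap, hB.apply p.1 p.2]
    split_ifs <;> ring
  rw [hST, sum_congr rfl fun p _ => hsplit p, sum_add_distrib, hswap, ← sum_add_distrib,
    ← sum_subtype (univ.filter fun p : ι × ι => p.1 < p.2) (by simp)
      fun p => pairWeight S T p * B p.1 p.2, sum_filter]
  refine sum_congr rfl fun p _ => ?_
  split_ifs <;> simp [hpair]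

theorem exists_eq_iSup_iSup {α β γ : Type*} [ConditionallyCompleteLinearOrder γ]
    [Finite α] [Nonempty α] [Finite β] [Nonempty β] (f : α → β → γ) :
    ∃ p : α × β, ⨆ a, ⨆ b, f a b = f p.1 p.2 := by
  obtain ⟨a, ha⟩ := exists_eq_ciSup_of_finite (f := fun a => ⨆ b, f a b)
  obtain ⟨b, hb⟩ := exists_eq_ciSup_of_finite (f := f a)
  exact ⟨(a, b), by rw [← ha, hb]⟩

section Moments

variable {Ω : Type*} [MeasurableSpace Ω] {μ : Measure Ω} [IsProbabilityMeasure μ]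

theorem mgf_sub_measureReal_le {W : Ω → ℝ} (hW : Measurable W)
    (hval : ∀ ω, W ω = 0 ∨ W ω = 1) {r : ℝ} (hr : |r| ≤ 1) :
    mgf (fun ω => W ω - μ.real {ω | W ω = 1}) μ r ≤ exp (μ.real {ω | W ω = 1} * r ^ 2) := by
  set θ := μ.real {ω | W ω = 1}
  have hE : MeasurableSet {ω | W ω = 1} := hW (measurableSet_singleton 1)
  have hlin : ∀ ω, exp (r * (W ω - θ)) =
      exp (-(r * θ)) * (1 + (exp r - 1) * {ω | W ω = 1}.indicator 1 ω) := by
    intro ω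
    rcases hval ω with h | h
    · simp [h]
    · simp only [h, Set.mem_ofPred_eq, Set.indicator_of_mem, Pi.one_apply, mul_one,
        add_sub_cancel, ← exp_add, exp_eq_exp]
      ring
  have hmean : mgf (fun ω => W ω - θ) μ r = exp (-(r * θ)) * (1 + (exp r - 1) * θ) := by
    simp only [mgf, hlin]
    rw [integral_const_mul, integral_add (integrable_const 1)
      (((integrable_const 1).indicator hE).const_mul _), integral_const_mul,
      integral_indicator_one hE]
    simp [θ]
  calc mgf (fun ω => W ω - θ) μ r
      ≤ exp (-(r * θ)) * exp ((exp r - 1) * θ) := by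
        rw [hmean]; gcongr; linarith [add_one_le_exp ((exp r - 1) * θ)]
    _ = exp (θ * (exp r - 1 - r)) := by rw [← exp_add]; ring_nf
    _ ≤ exp (θ * r ^ 2) := by
        gcongr; exact (le_abs_self _).trans (abs_exp_sub_one_sub_id_le hr)

theorem mgf_sum_mul_sub_measureReal_le {ι : Type*} [Fintype ι] {W : ι → Ω → ℝ}
    (hW : ∀ i, Measurable (W i)) (hind : iIndepFun W μ) (hval : ∀ i ω, W i ω = 0 ∨ W i ω = 1)
    {c : ι → ℝ} {s : ℝ} (hs : ∀ i, |s * c i| ≤ 1) :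
    mgf (fun ω => ∑ i, c i * (W i ω - μ.real {ω | W i ω = 1})) μ s ≤
      exp (s ^ 2 * ∑ i, c i ^ 2 * μ.real {ω | W i ω = 1}) := by
  set Y : ι → Ω → ℝ := fun i ω => c i * (W i ω - μ.real {ω | W i ω = 1})
  have hY : iIndepFun Y μ :=
    hind.comp (fun i x => c i * (x - μ.real {ω | W i ω = 1})) fun i => by fun_prop
  have hsum : (fun ω => ∑ i, Y i ω) = ∑ i, Y i := by ext; simp
  rw [hsum, hY.mgf_sum (fun i => by fun_prop) univ, mul_sum, exp_sum]
  refine prod_le_prod (fun i _ => mgf_nonneg) fun i _ => ?_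
  calc mgf (Y i) μ s = mgf (fun ω => W i ω - μ.real {ω | W i ω = 1}) μ (c i * s) :=
        mgf_const_mul _
    _ ≤ exp (μ.real {ω | W i ω = 1} * (c i * s) ^ 2) :=
        mgf_sub_measureReal_le (hW i) (hval i) (by rw [mul_comm]; exact hs i)
    _ = exp (s ^ 2 * (c i ^ 2 * μ.real {ω | W i ω = 1})) := by ring_nf

theorem integral_le_of_mgf_le {κ : Type*} [Fintype κ] {X : κ → Ω → ℝ} {F : Ω → ℝ}
    {t B C : ℝ} (ht : 0 < t) (hX : ∀ k, Measurable (X k)) (hXC : ∀ k ω, |X k ω| ≤ C)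
    (hF : ∀ ω, ∃ k, F ω = |X k ω|)
    (hmgf : ∀ k, mgf (X k) μ t ≤ exp B) (hmgf_neg : ∀ k, mgf (X k) μ (-t) ≤ exp B) :
    ∫ ω, F ω ∂μ ≤ (log (2 * Fintype.card κ) + B) / t := by
  obtain ⟨ω₀⟩ : Nonempty Ω := nonempty_of_isProbabilityMeasure μ
  have : Nonempty κ := ⟨(hF ω₀).choose⟩
  set M : ℝ := 2 * Fintype.card κ * exp B
  have hM : 0 < M := by positivity
  set Z : Ω → ℝ := fun ω => ∑ k, (exp (t * X k ω) + exp (-t * X k ω))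
  have hint : ∀ k s, Integrable (fun ω => exp (s * X k ω)) μ := fun k s =>
    integrable_exp_mul_of_mem_Icc (hX k).aemeasurable (ae_of_all _ fun ω => abs_le.mp (hXC k ω))
  have hint₂ : ∀ k, Integrable (fun ω => exp (t * X k ω) + exp (-t * X k ω)) μ :=
    fun k => (hint k t).add (hint k (-t))
  have hZ : Integrable Z μ := integrable_finsetSum _ fun k _ => hint₂ k
  have hZM : ∫ ω, Z ω ∂μ ≤ M := by
    rw [integral_finsetSum _ fun k _ => hint₂ k]
    calc ∑ k, ∫ ω, (exp (t * X k ω) + exp (-t * X k ω)) ∂μ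
        = ∑ k, (mgf (X k) μ t + mgf (X k) μ (-t)) :=
          sum_congr rfl fun k _ => integral_add (hint k t) (hint k (-t))
      _ ≤ ∑ _k : κ, 2 * exp B := sum_le_sum fun k _ => by linarith [hmgf k, hmgf_neg k]
      _ = M := by simp only [sum_const, card_univ, nsmul_eq_mul, M]; ring
  -- `x ≤ exp x - 1` at `x = t F - log M` linearises the soft maximum `log Z / t`.
  have hpoint : ∀ ω, F ω ≤ Z ω / (M * t) + (log M - 1) / t := by
    intro ω
    obtain ⟨k, hk⟩ := hF ω
    have hexp : exp (t * F ω) ≤ Z ω := by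
      calc exp (t * F ω) ≤ exp (t * X k ω) + exp (-t * X k ω) := by
            rcases abs_cases (X k ω) with ⟨h, -⟩ | ⟨h, -⟩
            · have : exp (t * F ω) ≤ exp (t * X k ω) := exp_le_exp.mpr (by nlinarith)
              linarith [exp_pos (-t * X k ω)]
            · have : exp (t * F ω) ≤ exp (-t * X k ω) := exp_le_exp.mpr (by nlinarith)
              linarith [exp_pos (t * X k ω)]
        _ ≤ Z ω := single_le_sum (f := fun k => exp (t * X k ω) + exp (-t * X k ω))
            (fun _ _ => by positivity) (mem_univ k)
    have hlin : t * F ω ≤ Z ω / M + (log M - 1) := by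
      have := add_one_le_exp (t * F ω - log M)
      rw [exp_sub, exp_log hM] at this
      have : exp (t * F ω) / M ≤ Z ω / M := by gcongr
      linarith
    rw [← div_div, ← add_div, le_div_iff₀ ht]
    linarith
  have hF0 : ∀ ω, 0 ≤ F ω := fun ω => by obtain ⟨k, hk⟩ := hF ω; exact hk ▸ abs_nonneg _
  calc ∫ ω, F ω ∂μ ≤ ∫ ω, (Z ω / (M * t) + (log M - 1) / t) ∂μ :=
        integral_mono_of_nonneg (ae_of_all _ hF0)
          ((hZ.div_const _).add (integrable_const _)) (ae_of_all _ hpoint)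
    _ = (∫ ω, Z ω ∂μ) / (M * t) + (log M - 1) / t := by
        rw [integral_add (hZ.div_const _) (integrable_const _), integral_div]; simp
    _ ≤ M / (M * t) + (log M - 1) / t := by gcongr
    _ = (log (2 * Fintype.card κ) + B) / t := by
        rw [log_mul (by positivity) (exp_pos B).ne', log_exp]; field_simp; ring

end Moments

theorem abs_sum_sum_le_matL1Norm {n : ℕ} (B : Matrix (Fin n) (Fin n) ℝ) (S T : Finset (Fin n)) :
    |∑ i ∈ S, ∑ j ∈ T, B i j| ≤ matL1Norm B :=
  calc |∑ i ∈ S, ∑ j ∈ T, B i j| ≤ ∑ i ∈ S, ∑ j ∈ T, |B i j| :=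
        (abs_sum_le_sum_abs _ _).trans (sum_le_sum fun _ _ => abs_sum_le_sum_abs _ _)
    _ ≤ matL1Norm B :=
        (sum_le_sum fun _ _ => sum_le_univ_sum_of_nonneg fun _ => abs_nonneg _).trans
          (sum_le_univ_sum_of_nonneg fun _ => sum_nonneg fun _ _ => abs_nonneg _)

theorem sum_lt_abs_le_matL1Norm {n : ℕ} (B : Matrix (Fin n) (Fin n) ℝ) :
    ∑ q : {p : Fin n × Fin n // p.1 < p.2}, |B q.1.1 q.1.2| ≤ matL1Norm B := by
  rw [← sum_subtype (univ.filter fun p : Fin n × Fin n => p.1 < p.2) (by simp)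
    fun p => |B p.1 p.2|, matL1Norm, ← Fintype.sum_prod_type']
  exact sum_le_univ_sum_of_nonneg fun _ => abs_nonneg _

theorem matL1Norm_le_sq {n : ℕ} {B : Matrix (Fin n) (Fin n) ℝ} (hB : ∀ i j, |B i j| ≤ 1) :
    matL1Norm B ≤ (n : ℝ) ^ 2 :=
  calc matL1Norm B ≤ ∑ _i : Fin n, ∑ _j : Fin n, (1 : ℝ) :=
        sum_le_sum fun i _ => sum_le_sum fun j _ => hB i j
    _ = (n : ℝ) ^ 2 := by simp [sq]

theorem log_two_mul_card_finset_prod_le {n : ℕ} (hn : 0 < n) :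
    log (2 * Fintype.card (Finset (Fin n) × Finset (Fin n))) ≤ 3 * n := by
  have hcard : (2 * Fintype.card (Finset (Fin n) × Finset (Fin n)) : ℝ) = 2 ^ (2 * n + 1) := by
    simp only [Fintype.card_prod, Fintype.card_finset, Fintype.card_fin]; push_cast; ring
  have hn' : (1 : ℝ) ≤ n := by exact_mod_cast hn
  have hlog2 : log 2 < 1 := log_two_lt_d9.trans (by norm_num)
  rw [hcard, log_pow]
  push_cast
  nlinarith

theorem exists_div_le_twelve_sqrt {n x L : ℝ} (hn : 1 ≤ n) (hx : 0 ≤ x) (hL : L ≤ 3 * n) :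
    ∃ t, 0 < t ∧ t ≤ 1 / 2 ∧
      1 / n ^ 2 * ((L + 4 * t ^ 2 * x) / t) ≤ 12 * √((x + n) / n ^ 3) := by
  obtain ⟨v, hv, rfl⟩ : ∃ v, 1 ≤ v ∧ n = v ^ 2 :=
    ⟨√n, one_le_sqrt.mpr hn, (sq_sqrt (by linarith)).symm⟩
  obtain ⟨u, hvu, hu⟩ : ∃ u, v ≤ u ∧ x + v ^ 2 = u ^ 2 :=
    ⟨√(x + v ^ 2), le_sqrt_of_sq_le (by linarith), (sq_sqrt (by positivity)).symm⟩
  have hv0 : 0 < v := by linarith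
  have hu0 : 0 < u := by linarith
  refine ⟨v / (2 * u), by positivity, by rw [div_le_div_iff₀ (by positivity) two_pos]; linarith,
    ?_⟩
  rw [hu, show u ^ 2 / (v ^ 2) ^ 3 = (u / v ^ 3) ^ 2 by ring, sqrt_sq (by positivity)]
  field_simp
  have hxu : x ≤ u ^ 2 := by linarith
  nlinarith [mul_le_mul_of_nonneg_left hL (sq_nonneg u),
    mul_le_mul_of_nonneg_left hxu (sq_nonneg v)]

section RandomGraph

variable {Ω : Type*} {n : ℕ} {Θ₀ : Matrix (Fin n) (Fin n) ℝ}
  {A : Ω → Matrix (Fin n) (Fin n) ℝ}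

theorem measurable_sum_sum_sub [MeasurableSpace Ω] (hAmeas : ∀ i j, Measurable fun ω => A ω i j)
    (S T : Finset (Fin n)) : Measurable fun ω => ∑ i ∈ S, ∑ j ∈ T, (A ω - Θ₀) i j :=
  Finset.measurable_sum _ fun i _ => Finset.measurable_sum _ fun j _ => by
    simpa only [Matrix.sub_apply] using (hAmeas i j).sub_const _

theorem abs_sum_sum_sub_le (hΘrange : ∀ i j, Θ₀ i j ∈ Set.Icc (0:ℝ) 1)
    (hAval : ∀ ω i j, A ω i j = 0 ∨ A ω i j = 1) (ω : Ω) (S T : Finset (Fin n)) :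
    |∑ i ∈ S, ∑ j ∈ T, (A ω - Θ₀) i j| ≤ (n : ℝ) ^ 2 := by
  refine (abs_sum_sum_le_matL1Norm _ S T).trans (matL1Norm_le_sq fun i j => ?_)
  have hA : A ω i j ∈ Set.Icc (0:ℝ) 1 := by rcases hAval ω i j with h | h <;> simp [h]
  exact abs_sub_le_of_nonneg_of_le hA.1 hA.2 (hΘrange i j).1 (hΘrange i j).2

theorem mgf_sum_sum_sub_le [MeasurableSpace Ω] {μ : Measure Ω} [IsProbabilityMeasure μ]
    (hΘsymm : Θ₀.IsSymm) (hΘdiag : ∀ i, Θ₀ i i = 0)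
    (hAmeas : ∀ i j, Measurable fun ω => A ω i j)
    (hAsymm : ∀ ω, (A ω).IsSymm) (hAdiag : ∀ ω i, A ω i i = 0)
    (hAval : ∀ ω i j, A ω i j = 0 ∨ A ω i j = 1)
    (hABern : ∀ i j, i < j → μ.real {ω | A ω i j = 1} = Θ₀ i j)
    (hAindep : iIndepFun
      (fun p : {p : Fin n × Fin n // p.1 < p.2} => fun ω => A ω p.1.1 p.1.2) μ)
    (S T : Finset (Fin n)) {s : ℝ} (hs : |s| ≤ 1 / 2) :
    mgf (fun ω => ∑ i ∈ S, ∑ j ∈ T, (A ω - Θ₀) i j) μ s ≤ exp (4 * s ^ 2 * matL1Norm Θ₀) := by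
  have hweight : ∀ q : Fin n × Fin n, |s * pairWeight S T q| ≤ 1 := fun q => by
    rw [abs_mul]
    calc |s| * |pairWeight S T q| ≤ 1 / 2 * 2 :=
          mul_le_mul hs (abs_pairWeight_le_two S T q) (abs_nonneg _) (by norm_num)
      _ = 1 := by norm_num
  have hdecomp : (fun ω => ∑ i ∈ S, ∑ j ∈ T, (A ω - Θ₀) i j) = fun ω =>
      ∑ q : {p : Fin n × Fin n // p.1 < p.2},
        pairWeight S T q.1 * (A ω q.1.1 q.1.2 - μ.real {ω | A ω q.1.1 q.1.2 = 1}) := by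
    ext ω
    rw [sum_sum_eq_sum_pairWeight_mul ((hAsymm ω).sub hΘsymm) fun i => by
      simp [hAdiag, hΘdiag]]
    refine sum_congr rfl fun q _ => ?_
    rw [Matrix.sub_apply, hABern _ _ q.2]
  rw [hdecomp]
  refine (mgf_sum_mul_sub_measureReal_le (fun q => hAmeas _ _) hAindep
    (fun q ω => hAval ω _ _) fun q => hweight q.1).trans (exp_le_exp.mpr ?_)
  calc s ^ 2 * ∑ q : {p : Fin n × Fin n // p.1 < p.2},
        pairWeight S T q.1 ^ 2 * μ.real {ω | A ω q.1.1 q.1.2 = 1}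
      ≤ s ^ 2 * ∑ q : {p : Fin n × Fin n // p.1 < p.2}, 4 * |Θ₀ q.1.1 q.1.2| := by
        gcongr with q
        · rw [← sq_abs]
          exact (pow_le_pow_left₀ (abs_nonneg _) (abs_pairWeight_le_two S T q.1) 2).trans
            (by norm_num)
        · rw [hABern _ _ q.2]
          exact le_abs_self _
    _ ≤ 4 * s ^ 2 * matL1Norm Θ₀ := by
        rw [← mul_sum, ← mul_assoc, mul_comm (s ^ 2)]
        gcongr
        exact sum_lt_abs_le_matL1Norm Θ₀

end RandomGraph

/-- For an inhomogeneous random graph with symmetric zero-diagonal probability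
matrix `Θ₀`, the sampled adjacency matrix `A` satisfies
`E‖A − Θ₀‖_□ ≤ 12·√((‖Θ₀‖₁ + n)/n³)`. -/
theorem expected_cutNorm_adjacency {Ω : Type*} [MeasurableSpace Ω] (μ : Measure Ω)
    [IsProbabilityMeasure μ] {n : ℕ}
    (Θ₀ : Matrix (Fin n) (Fin n) ℝ)
    (hΘsymm : Θ₀.IsSymm) (hΘdiag : ∀ i, Θ₀ i i = 0)
    (hΘrange : ∀ i j, Θ₀ i j ∈ Set.Icc (0:ℝ) 1)
    (A : Ω → Matrix (Fin n) (Fin n) ℝ)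
    (hAmeas : ∀ i j, Measurable fun ω => A ω i j)
    (hAsymm : ∀ ω, (A ω).IsSymm) (hAdiag : ∀ ω i, A ω i i = 0)
    (hAval : ∀ ω i j, A ω i j = 0 ∨ A ω i j = 1)
    (hABern : ∀ i j, i < j → (μ {ω | A ω i j = 1}).toReal = Θ₀ i j)
    (hAindep : iIndepFun
      (fun p : {p : Fin n × Fin n // p.1 < p.2} => fun ω => A ω p.1.1 p.1.2) μ) :
    ∫ ω, matCutNorm (A ω - Θ₀) ∂μ ≤
      12 * Real.sqrt ((matL1Norm Θ₀ + n) / (n : ℝ) ^ 3) := by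
  rcases Nat.eq_zero_or_pos n with rfl | hn
  · simp [matCutNorm]
  obtain ⟨t, ht0, ht2, hbound⟩ := exists_div_le_twelve_sqrt (by exact_mod_cast hn)
    (sum_nonneg fun _ _ => sum_nonneg fun _ _ => abs_nonneg _)
    (log_two_mul_card_finset_prod_le hn)
  have ht : |t| ≤ 1 / 2 := by rwa [abs_of_pos ht0]
  have hmgf (S T : Finset (Fin n)) (s : ℝ) (hs : |s| ≤ 1 / 2) :=
    mgf_sum_sum_sub_le hΘsymm hΘdiag hAmeas hAsymm hAdiag hAval hABern hAindep S T hs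
  have hmax := integral_le_of_mgf_le (μ := μ) (κ := Finset (Fin n) × Finset (Fin n))
    (X := fun k ω => ∑ i ∈ k.1, ∑ j ∈ k.2, (A ω - Θ₀) i j) ht0
    (fun k => measurable_sum_sum_sub hAmeas k.1 k.2)
    (fun k ω => abs_sum_sum_sub_le hΘrange hAval ω k.1 k.2)
    (fun ω => exists_eq_iSup_iSup fun S T => |∑ i ∈ S, ∑ j ∈ T, (A ω - Θ₀) i j|)
    (fun k => hmgf k.1 k.2 t ht)
    (fun k => by simpa only [neg_sq] using hmgf k.1 k.2 (-t) (by rwa [abs_neg]))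
  calc ∫ ω, matCutNorm (A ω - Θ₀) ∂μ
      = 1 / (n : ℝ) ^ 2 * ∫ ω, ⨆ S : Finset (Fin n), ⨆ T : Finset (Fin n),
          |∑ i ∈ S, ∑ j ∈ T, (A ω - Θ₀) i j| ∂μ := integral_const_mul _ _
    _ ≤ _ := mul_le_mul_of_nonneg_left hmax (by positivity)
    _ ≤ 12 * √((matL1Norm Θ₀ + n) / (n : ℝ) ^ 3) := hbound
end

section
/- Let Θ̂_λ be defined as a minimizer over all n×n matrices Θ of ‖A − Θ‖₂² + λ²·rank(Θ), and let E = A − Θ₀ with ‖E‖_{2→2} ≤ λ/2. Then ‖Θ̂_λ − Θ₀‖₂² ≤ 4λ²·rank(Θ₀), where ‖·‖₂ is the Frobenius norm. -/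
/-!
For `E = A - Θ₀` and `Δ = Θ̂ - Θ₀`, comparing the penalized objective at `Θ̂` and at `Θ₀` gives the
basic inequality `‖Δ‖₂² ≤ 2⟨E, Δ⟩ + λ²(rank Θ₀ - rank Θ̂)`. Trace duality bounds `⟨E, Δ⟩` by
`‖E‖_{2→2} √(rank Δ) ‖Δ‖₂ ≤ (λ/2) √(rank Θ̂ + rank Θ₀) ‖Δ‖₂`, and `2ab ≤ a² + b²` absorbs half of
`‖Δ‖₂²`, leaving `‖Δ‖₂² ≤ 3λ² rank Θ₀ - λ² rank Θ̂`.

Trace duality comes from an orthonormal basis `u₁, …, u_r` of the column space of `M`, `r = rank M`: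
then `⟨E, M⟩ = ∑ₖ ⟨Mᵀuₖ, Eᵀuₖ⟩` and `∑ₖ ‖Mᵀuₖ‖² = ‖M‖₂²`, so Cauchy–Schwarz over the `r` indices
gives `|⟨E, M⟩| ≤ ‖E‖_{2→2} √r ‖M‖₂`.
-/

noncomputable def specNorm {n : ℕ} (B : Matrix (Fin n) (Fin n) ℝ) : ℝ :=
  sSup {r : ℝ | ∃ x : Fin n → ℝ, (∑ i, (x i) ^ 2) ≤ 1 ∧
    r = Real.sqrt (∑ i, (B.mulVec x i) ^ 2)}

noncomputable def frobSq {n : ℕ} (B : Matrix (Fin n) (Fin n) ℝ) : ℝ :=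
  ∑ i, ∑ j, (B i j) ^ 2

open Module Matrix
open scoped InnerProductSpace InnerProduct

theorem Finset.sum_le_sqrt_card_mul_sqrt_sum_sq {ι : Type*} (s : Finset ι) (f : ι → ℝ) :
    ∑ i ∈ s, f i ≤ √(s.card : ℝ) * √(∑ i ∈ s, f i ^ 2) := by
  rw [← Real.sqrt_mul (by positivity)]
  exact Real.le_sqrt_of_sq_le (sq_sum_le_card_mul_sum_sq)

section HilbertSchmidt

variable {𝕜 F G ι κ : Type*} [RCLike 𝕜] [NormedAddCommGroup F] [InnerProductSpace 𝕜 F]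
  [NormedAddCommGroup G] [InnerProductSpace 𝕜 G] [Fintype ι] [Fintype κ]

theorem OrthonormalBasis.sum_inner_mul_inner_of_mem {V : Submodule 𝕜 G}
    (b : OrthonormalBasis κ 𝕜 V) (x : G) {y : G} (hy : y ∈ V) :
    ∑ k, ⟪x, (b k : G)⟫_𝕜 * ⟪(b k : G), y⟫_𝕜 = ⟪x, y⟫_𝕜 := by
  have hy' : ∑ k, ⟪(b k : G), y⟫_𝕜 • (b k : G) = y := by
    simpa using congrArg Subtype.val (b.sum_repr' ⟨y, hy⟩)
  conv_rhs => rw [← hy']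
  simp only [inner_sum, inner_smul_right, mul_comm]

variable [CompleteSpace F] [CompleteSpace G]

namespace ContinuousLinearMap

theorem sum_inner_apply_eq_sum_inner_adjoint_apply (S T : F →L[𝕜] G)
    (e : OrthonormalBasis ι 𝕜 F) (b : OrthonormalBasis κ 𝕜 (LinearMap.range (T : F →ₗ[𝕜] G))) :
    ∑ i, ⟪S (e i), T (e i)⟫_𝕜 = ∑ k, ⟪(T†) (b k), (S†) (b k)⟫_𝕜 := by
  calc ∑ i, ⟪S (e i), T (e i)⟫_𝕜
      = ∑ i, ∑ k, ⟪S (e i), (b k : G)⟫_𝕜 * ⟪(b k : G), T (e i)⟫_𝕜 :=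
        Finset.sum_congr rfl fun i _ =>
          (b.sum_inner_mul_inner_of_mem _ (LinearMap.mem_range_self (T : F →ₗ[𝕜] G) (e i))).symm
    _ = ∑ k, ∑ i, ⟪(T†) (b k), e i⟫_𝕜 * ⟪e i, (S†) (b k)⟫_𝕜 := by
        rw [Finset.sum_comm]
        simp only [adjoint_inner_left, adjoint_inner_right, mul_comm]
    _ = _ := Finset.sum_congr rfl fun k _ => e.sum_inner_mul_inner _ _

theorem norm_sum_inner_apply_le (S T : F →L[𝕜] G) (e : OrthonormalBasis ι 𝕜 F) :
    ‖∑ i, ⟪S (e i), T (e i)⟫_𝕜‖ ≤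
      ‖S‖ * √(finrank 𝕜 (LinearMap.range (T : F →ₗ[𝕜] G))) * √(∑ i, ‖T (e i)‖ ^ 2) := by
  have : FiniteDimensional 𝕜 F := e.toBasis.finiteDimensional_of_finite
  let b := stdOrthonormalBasis 𝕜 (LinearMap.range (T : F →ₗ[𝕜] G))
  have hb : ∀ k, ‖(b k : G)‖ = 1 := b.orthonormal.1
  have hT : ∑ i, ‖T (e i)‖ ^ 2 = ∑ k, ‖(T†) (b k)‖ ^ 2 := by
    have := sum_inner_apply_eq_sum_inner_adjoint_apply T T e b
    simp only [inner_self_eq_norm_sq_to_K] at this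
    exact_mod_cast this
  calc ‖∑ i, ⟪S (e i), T (e i)⟫_𝕜‖
      = ‖∑ k, ⟪(T†) (b k), (S†) (b k)⟫_𝕜‖ := by
        rw [sum_inner_apply_eq_sum_inner_adjoint_apply S T e b]
    _ ≤ ∑ k, ‖(T†) (b k)‖ * ‖(S†) (b k)‖ :=
        (norm_sum_le _ _).trans (Finset.sum_le_sum fun k _ => norm_inner_le_norm _ _)
    _ ≤ ∑ k, ‖(T†) (b k)‖ * ‖S‖ := by
        gcongr with k
        simpa [hb k] using (S†).le_opNorm (b k)
    _ = ‖S‖ * ∑ k, ‖(T†) (b k)‖ := by rw [← Finset.sum_mul, mul_comm]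
    _ ≤ ‖S‖ * (√(finrank 𝕜 (LinearMap.range (T : F →ₗ[𝕜] G))) *
          √(∑ k, ‖(T†) (b k)‖ ^ 2)) := by
        gcongr
        simpa using Finset.univ.sum_le_sqrt_card_mul_sqrt_sum_sq fun k => ‖(T†) (b k)‖
    _ = _ := by rw [hT, mul_assoc]

end ContinuousLinearMap

end HilbertSchmidt

namespace Matrix

theorem rank_sub_le {m n K : Type*} [Fintype m] [Fintype n] [Field K] (X Y : Matrix m n K) :
    (X - Y).rank ≤ X.rank + Y.rank := by
  refine (Submodule.finrank_mono ?_).trans (Submodule.finrank_add_le_finrank_add_finrank _ _)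
  rintro _ ⟨v, rfl⟩
  rw [mulVecLin_apply, sub_mulVec]
  exact Submodule.sub_mem_sup ⟨v, rfl⟩ ⟨v, rfl⟩

section EuclideanCLM

variable {𝕜 m : Type*} [RCLike 𝕜] [Fintype m] [DecidableEq m]

theorem toEuclideanCLM_basisFun_apply (A : Matrix m m 𝕜) (i j : m) :
    toEuclideanCLM (𝕜 := 𝕜) A (EuclideanSpace.basisFun m 𝕜 j) i = A i j := by
  simp [EuclideanSpace.basisFun_apply]

theorem rank_eq_finrank_range_toEuclideanCLM (M : Matrix m m 𝕜) :
    M.rank = finrank 𝕜 (LinearMap.range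
      (toEuclideanCLM (𝕜 := 𝕜) M : EuclideanSpace 𝕜 m →ₗ[𝕜] EuclideanSpace 𝕜 m)) :=
  M.rank_eq_finrank_range_toLin _ _

end EuclideanCLM

variable {n : ℕ}

def frobInner (E M : Matrix (Fin n) (Fin n) ℝ) : ℝ := ∑ i, ∑ j, E i j * M i j

theorem frobSq_sub (X Y : Matrix (Fin n) (Fin n) ℝ) :
    frobSq (X - Y) = frobSq X - 2 * frobInner X Y + frobSq Y := by
  simp only [frobSq, frobInner, sub_apply, sub_sq, Finset.sum_add_distrib, Finset.sum_sub_distrib,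
    Finset.mul_sum, mul_assoc]

theorem frobInner_eq_sum_inner (E M : Matrix (Fin n) (Fin n) ℝ) :
    frobInner E M = ∑ j, ⟪toEuclideanCLM (𝕜 := ℝ) E (EuclideanSpace.basisFun (Fin n) ℝ j),
      toEuclideanCLM (𝕜 := ℝ) M (EuclideanSpace.basisFun (Fin n) ℝ j)⟫_ℝ := by
  simp only [frobInner, PiLp.inner_apply, toEuclideanCLM_basisFun_apply, RCLike.inner_apply,
    conj_trivial, mul_comm]
  exact Finset.sum_comm

theorem frobSq_eq_sum_norm_sq (M : Matrix (Fin n) (Fin n) ℝ) :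
    frobSq M = ∑ j, ‖toEuclideanCLM (𝕜 := ℝ) M (EuclideanSpace.basisFun (Fin n) ℝ j)‖ ^ 2 := by
  simp only [frobSq, EuclideanSpace.real_norm_sq_eq, toEuclideanCLM_basisFun_apply]
  exact Finset.sum_comm

theorem specNorm_eq_norm_toEuclideanCLM (B : Matrix (Fin n) (Fin n) ℝ) :
    specNorm B = ‖toEuclideanCLM (𝕜 := ℝ) B‖ := by
  have hnorm (x : Fin n → ℝ) : ‖WithLp.toLp 2 x‖ = √(∑ i, x i ^ 2) := by
    simp [EuclideanSpace.norm_eq]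
  rw [← ContinuousLinearMap.sSup_unitClosedBall_eq_norm, specNorm]
  congr 1
  ext r
  simp only [Set.mem_ofPred_eq, Set.mem_image, Metric.mem_closedBall, dist_zero_right]
  constructor
  · rintro ⟨x, hx, rfl⟩
    exact ⟨WithLp.toLp 2 x, by rwa [hnorm, Real.sqrt_le_one], by simp [hnorm]⟩
  · rintro ⟨y, hy, rfl⟩
    obtain ⟨x, rfl⟩ : ∃ x, y = WithLp.toLp 2 x := ⟨y.ofLp, rfl⟩
    rw [hnorm, Real.sqrt_le_one] at hy
    exact ⟨x, hy, by simp [hnorm]⟩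

theorem specNorm_nonneg (B : Matrix (Fin n) (Fin n) ℝ) : 0 ≤ specNorm B :=
  B.specNorm_eq_norm_toEuclideanCLM ▸ norm_nonneg _

theorem abs_frobInner_le (E M : Matrix (Fin n) (Fin n) ℝ) :
    |frobInner E M| ≤ specNorm E * √M.rank * √(frobSq M) := by
  rw [frobInner_eq_sum_inner, specNorm_eq_norm_toEuclideanCLM,
    rank_eq_finrank_range_toEuclideanCLM, frobSq_eq_sum_norm_sq, ← Real.norm_eq_abs]
  exact ContinuousLinearMap.norm_sum_inner_apply_le _ _ _

end Matrix

theorem rank_penalized_estimator_general {n : ℕ}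
    (A Θ₀ Θhat : Matrix (Fin n) (Fin n) ℝ) (lam : ℝ)
    (hmin : ∀ Θ : Matrix (Fin n) (Fin n) ℝ,
      frobSq (A - Θhat) + lam ^ 2 * (Θhat.rank : ℝ) ≤
        frobSq (A - Θ) + lam ^ 2 * (Θ.rank : ℝ))
    (hnoise : specNorm (A - Θ₀) ≤ lam / 2) :
    frobSq (Θhat - Θ₀) ≤ 4 * lam ^ 2 * (Θ₀.rank : ℝ) := by
  set E := A - Θ₀
  set Δ := Θhat - Θ₀
  have hbasic : frobSq Δ ≤ 2 * frobInner E Δ + lam ^ 2 * (Θ₀.rank - Θhat.rank) := by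
    have h := hmin Θ₀
    rw [← sub_sub_sub_cancel_right A Θhat Θ₀, frobSq_sub] at h
    linarith
  have hrank : √Δ.rank ≤ √(Θhat.rank + Θ₀.rank) :=
    Real.sqrt_le_sqrt (by exact_mod_cast rank_sub_le Θhat Θ₀)
  set r : ℝ := Θhat.rank + Θ₀.rank
  have hdual : 2 * frobInner E Δ ≤ lam * √r * √(frobSq Δ) := calc
    2 * frobInner E Δ ≤ 2 * (specNorm E * √Δ.rank * √(frobSq Δ)) := by
        gcongr
        exact (le_abs_self _).trans (abs_frobInner_le E Δ)
    _ ≤ 2 * (lam / 2 * √r * √(frobSq Δ)) := by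
        have : 0 ≤ lam / 2 := (specNorm_nonneg E).trans hnoise
        gcongr
    _ = lam * √r * √(frobSq Δ) := by ring
  have hamgm :
      2 * (lam * √r) * √(frobSq Δ) ≤ lam ^ 2 * Θhat.rank + lam ^ 2 * Θ₀.rank + frobSq Δ := by
    have hΔ : 0 ≤ frobSq Δ := by simp only [frobSq]; positivity
    have := two_mul_le_add_sq (lam * √r) √(frobSq Δ)
    rwa [mul_pow, Real.sq_sqrt (by positivity), Real.sq_sqrt hΔ, mul_add] at this
  have : 0 ≤ lam ^ 2 * Θhat.rank := by positivity
  have : 0 ≤ lam ^ 2 * Θ₀.rank := by positivity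
  linarith

/-- If `Θ̂` minimizes `‖A − Θ‖₂² + λ²·rank Θ` and `‖A − Θ₀‖_{2→2} ≤ λ/2`, then
`‖Θ̂ − Θ₀‖₂² ≤ 4λ²·rank Θ₀`. -/
theorem rank_penalized_estimator {n : ℕ}
    (A Θ₀ Θhat : Matrix (Fin n) (Fin n) ℝ) (lam : ℝ) (hlam : 0 ≤ lam)
    (hmin : ∀ Θ : Matrix (Fin n) (Fin n) ℝ,
      frobSq (A - Θhat) + lam ^ 2 * (Θhat.rank : ℝ) ≤
        frobSq (A - Θ) + lam ^ 2 * (Θ.rank : ℝ))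
    (hnoise : specNorm (A - Θ₀) ≤ lam / 2) :
    frobSq (Θhat - Θ₀) ≤ 4 * lam ^ 2 * (Θ₀.rank : ℝ) :=
  rank_penalized_estimator_general A Θ₀ Θhat lam hmin hnoise
end
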